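/- arXiv:2002.08261 — 12 statements merged into one kernel-verified Lean document; each statement's English description precedes it below -/
import Mathlib

section
/- Let A be a Banach algebra and f ∈ A*. If f(x_n y_n) → 0 for all weakly null sequences (x_n), (y_n) in A, then f(x_n y_n) → 0 whenever (x_n) is weakly null and (y_n) is weakly Cauchy in A. -/
open Filter Topology ENNReal

/-- A sequence is weakly null if `f (x n) → 0` for every continuous linear functional `f`. -/
def WeaklyNull {A : Type*} [NormedAddCommGroup A] [NormedSpace ℝ A] (x : ℕ → A) : Prop :=
  ∀ f : A →L[ℝ] ℝ, Tendsto (fun n => f (x n)) atTop (𝓝 0)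

/-- A sequence is weakly Cauchy if `f (x n)` converges for every continuous linear functional. -/
def WeaklyCauchy {A : Type*} [NormedAddCommGroup A] [NormedSpace ℝ A] (x : ℕ → A) : Prop :=
  ∀ f : A →L[ℝ] ℝ, ∃ L : ℝ, Tendsto (fun n => f (x n)) atTop (𝓝 L)

/-- `E ⊆ A*` is an L-set: `sup_{f ∈ E} |f (x n)| → 0` for every weakly null `x`. -/
def LSet {A : Type*} [NormedAddCommGroup A] [NormedSpace ℝ A] (E : Set (A →L[ℝ] ℝ)) : Prop :=
  ∀ x : ℕ → A, WeaklyNull x → ∀ ε > (0 : ℝ), ∃ N : ℕ, ∀ n ≥ N, ∀ f ∈ E, |f (x n)| < ε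

/-- A set is weakly precompact if every sequence in it has a weakly Cauchy subsequence. -/
def WeaklyPrecompact {A : Type*} [NormedAddCommGroup A] [NormedSpace ℝ A] (K : Set A) : Prop :=
  ∀ x : ℕ → A, (∀ n, x n ∈ K) → ∃ φ : ℕ → ℕ, StrictMono φ ∧ WeaklyCauchy (x ∘ φ)

/-- A map is completely continuous if it sends weakly null sequences to norm null sequences. -/
def CompletelyContinuous {A B : Type*} [NormedAddCommGroup A] [NormedSpace ℝ A]
    [NormedAddCommGroup B] (T : A → B) : Prop :=
  ∀ x : ℕ → A, WeaklyNull x → Tendsto (fun n => ‖T (x n)‖) atTop (𝓝 0)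

/-- The multiplication operator `T_f : A → A*`, `(T_f a) x = f (a * x)`. -/
noncomputable def Tf {A : Type*} [NormedRing A] [NormedAlgebra ℝ A]
    (f : A →L[ℝ] ℝ) (a : A) : A →L[ℝ] ℝ :=
  f.comp (ContinuousLinearMap.mul ℝ A a)

/-- The multiplication operator `S_f : A → A*`, `(S_f a) x = f (x * a)`. -/
noncomputable def Sf {A : Type*} [NormedRing A] [NormedAlgebra ℝ A]
    (f : A →L[ℝ] ℝ) (a : A) : A →L[ℝ] ℝ :=
  f.comp ((ContinuousLinearMap.mul ℝ A).flip a)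

/-- `w` is an ℓ¹-sequence: equivalent to the unit vector basis of ℓ¹. -/
def IsL1Sequence {A : Type*} [NormedAddCommGroup A] [NormedSpace ℝ A] (w : ℕ → A) : Prop :=
  ∃ c C : ℝ, 0 < c ∧ ∀ (s : Finset ℕ) (lam : ℕ → ℝ),
    c * ∑ n ∈ s, |lam n| ≤ ‖∑ n ∈ s, lam n • w n‖ ∧
      ‖∑ n ∈ s, lam n • w n‖ ≤ C * ∑ n ∈ s, |lam n|

/-- The Schur property: weakly convergent sequences are norm convergent. -/
def SchurProperty (A : Type*) [NormedAddCommGroup A] [NormedSpace ℝ A] : Prop :=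
  ∀ (x : ℕ → A) (L : A),
    (∀ f : A →L[ℝ] ℝ, Tendsto (fun n => f (x n)) atTop (𝓝 (f L))) →
      Tendsto x atTop (𝓝 L)


theorem weaklyNull_weaklyCauchy_of_weaklyNull_weaklyNull {A : Type*} [NormedRing A]
    [NormedAlgebra ℝ A] [CompleteSpace A] (f : A →L[ℝ] ℝ)
    (h : ∀ x y : ℕ → A, WeaklyNull x → WeaklyNull y →
      Tendsto (fun n => f (x n * y n)) atTop (𝓝 0)) :
    ∀ x y : ℕ → A, WeaklyNull x → WeaklyCauchy y →
      Tendsto (fun n => f (x n * y n)) atTop (𝓝 0) := by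
  intro x y hx hy
  by_contra hc
  rw [Metric.tendsto_atTop] at hc
  push_neg at hc
  obtain ⟨ε, hε, hfreq⟩ := hc
  obtain ⟨φ, hφ, hφprop⟩ :=
    Filter.extraction_of_frequently_atTop (Filter.frequently_atTop.2 hfreq)
  have key : ∀ m : ℕ, ∃ N : ℕ, ∀ n ≥ N, |f (x n * y (φ m))| < ε / 2 := by
    intro m
    have hx' := hx (Sf f (y (φ m)))
    rw [Metric.tendsto_atTop] at hx'
    obtain ⟨N, hN⟩ := hx' (ε / 2) (by linarith)
    exact ⟨N, fun n hn => by simpa [Sf, Real.dist_eq] using hN n hn⟩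
  choose Nf hNf using key
  set ψ : ℕ → ℕ := fun j => Nat.rec 0 (fun _ p => max (Nf p) (p + 1)) j with hψ
  have hψsucc : ∀ j, ψ (j + 1) = max (Nf (ψ j)) (ψ j + 1) := fun j => rfl
  have hψmono : StrictMono ψ := strictMono_nat_of_lt_succ (fun n => by
    rw [hψsucc]; exact lt_of_lt_of_le (Nat.lt_succ_self _) (le_max_right _ _))
  have hψprop : ∀ j, |f (x (φ (ψ (j + 1))) * y (φ (ψ j)))| < ε / 2 := by
    intro j
    apply hNf (ψ j)
    calc Nf (ψ j) ≤ ψ (j + 1) := by rw [hψsucc]; exact le_max_left _ _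
      _ ≤ φ (ψ (j + 1)) := hφ.le_apply
  have hmono1 : StrictMono (fun j => φ (ψ (j + 1))) :=
    hφ.comp (fun a b hab => hψmono (Nat.succ_lt_succ hab))
  have hmono0 : StrictMono (fun j => φ (ψ j)) := hφ.comp hψmono
  set u : ℕ → A := fun j => x (φ (ψ (j + 1))) with hu_def
  set v : ℕ → A := fun j => y (φ (ψ (j + 1))) - y (φ (ψ j)) with hv_def
  have hu : WeaklyNull u := fun g => (hx g).comp hmono1.tendsto_atTop
  have hv : WeaklyNull v := by
    intro g
    obtain ⟨L, hL⟩ := hy g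
    have t1 := hL.comp hmono1.tendsto_atTop
    have t2 := hL.comp hmono0.tendsto_atTop
    have := t1.sub t2
    simpa [hv_def, map_sub] using this
  have hten := h u v hu hv
  rw [Metric.tendsto_atTop] at hten
  obtain ⟨N, hN⟩ := hten (ε / 2) (by linarith)
  have h1 : ε ≤ |f (x (φ (ψ (N + 1))) * y (φ (ψ (N + 1))))| := by
    have := hφprop (ψ (N + 1))
    simpa [Real.dist_eq] using this
  have h2 := hψprop N
  have h3 : |f (u N * v N)| < ε / 2 := by
    have := hN N (le_refl N)
    simpa [Real.dist_eq] using this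
  have heq : f (u N * v N)
      = f (x (φ (ψ (N + 1))) * y (φ (ψ (N + 1)))) - f (x (φ (ψ (N + 1))) * y (φ (ψ N))) := by
    simp [hu_def, hv_def, mul_sub, map_sub]
  rw [heq] at h3
  have habs := abs_sub_abs_le_abs_sub (f (x (φ (ψ (N + 1))) * y (φ (ψ (N + 1)))))
    (f (x (φ (ψ (N + 1))) * y (φ (ψ N))))
  linarith
end

section
/- Let A be a Banach algebra and f ∈ A*. Define T_f : A → A* by (T_f a)(x) = f(ax). Then the following are equivalent: (i) f(x_n y_n) → 0 for all weakly null sequences (x_n), (y_n) in A; (ii) f(x_n y_n) → 0 whenever (x_n) is weakly null and (y_n) is weakly Cauchy; (iii) T_f maps weakly precompact subsets of A onto L-sets in A*. -/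
open Filter Topology ENNReal

/-!
A weakly null `x` can be paired with a weakly Cauchy `y` by a diagonal choice of indices `g i ≥ i`
with `B (x (g i)) (y i)` small; then `B (x (g i)) (y (g i))` differs from it by
`B (x (g i)) (y (g i) - y i)`, a value of `B` on two weakly null sequences.
Condition (iii) says the same with the weakly Cauchy sequence on the left, so the mirrored
argument ties it to (i): a weakly precompact set supplies weakly Cauchy subsequences, and the
range of a weakly Cauchy sequence is weakly precompact.
-/

section WeakSequences

variable {E : Type*} [NormedAddCommGroup E] [NormedSpace ℝ E]

lemma WeaklyNull.weaklyCauchy {x : ℕ → E} (hx : WeaklyNull x) : WeaklyCauchy x :=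
  fun g => ⟨0, hx g⟩

lemma WeaklyNull.comp_tendsto {x : ℕ → E} (hx : WeaklyNull x) {g : ℕ → ℕ}
    (hg : Tendsto g atTop atTop) : WeaklyNull (x ∘ g) :=
  fun φ => (hx φ).comp hg

lemma WeaklyCauchy.comp_tendsto {x : ℕ → E} (hx : WeaklyCauchy x) {g : ℕ → ℕ}
    (hg : Tendsto g atTop atTop) : WeaklyCauchy (x ∘ g) :=
  fun φ => (hx φ).imp fun _ hL => hL.comp hg

lemma WeaklyCauchy.weaklyNull_sub {x : ℕ → E} (hx : WeaklyCauchy x) {g : ℕ → ℕ}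
    (hg : Tendsto g atTop atTop) : WeaklyNull fun i => x (g i) - x i := fun φ => by
  obtain ⟨L, hL⟩ := hx φ
  simpa using (hL.comp hg).sub hL

lemma WeaklyCauchy.weaklyPrecompact_range {x : ℕ → E} (hx : WeaklyCauchy x) :
    WeaklyPrecompact (Set.range x) := by
  intro z hz
  choose m hm using hz
  obtain rfl : z = x ∘ m := funext fun n => (hm n).symm
  by_cases hrep : ∃ v, ∃ᶠ n in atTop, m n = v
  · obtain ⟨v, hv⟩ := hrep
    obtain ⟨φ, hφ, hφv⟩ := extraction_of_frequently_atTop hv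
    refine ⟨φ, hφ, fun g => ⟨g (x v), ?_⟩⟩
    simp [Function.comp_def, hφv]
  · simp only [not_exists, not_frequently] at hrep
    have hm_tendsto : Tendsto m atTop cofinite := le_cofinite_iff_eventually_ne.mpr hrep
    rw [Nat.cofinite_eq_atTop] at hm_tendsto
    exact ⟨id, strictMono_id, hx.comp_tendsto hm_tendsto⟩

end WeakSequences

lemma exists_tendsto_atTop_tendsto_diag {a : ℕ → ℕ → ℝ}
    (ha : ∀ i, Tendsto (a · i) atTop (𝓝 0)) :
    ∃ g : ℕ → ℕ, Tendsto g atTop atTop ∧ Tendsto (fun i => a (g i) i) atTop (𝓝 0) := by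
  have hsmall : ∀ i, ∃ j, i ≤ j ∧ ‖a j i‖ < 1 / ((i : ℝ) + 1) := fun i =>
    ((eventually_ge_atTop i).and
      ((ha i).norm.eventually (gt_mem_nhds (by rw [norm_zero]; positivity)))).exists
  choose g hge hg using hsmall
  exact ⟨g, tendsto_atTop_mono hge tendsto_id,
    squeeze_zero_norm (fun i => (hg i).le) tendsto_one_div_add_atTop_nhds_zero_nat⟩

section Bilinear

variable {E F : Type*} [NormedAddCommGroup E] [NormedSpace ℝ E]
  [NormedAddCommGroup F] [NormedSpace ℝ F] (B : E →L[ℝ] F →L[ℝ] ℝ)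

theorem tendsto_of_weaklyNull_of_weaklyCauchy
    (hB : ∀ x y, WeaklyNull x → WeaklyNull y → Tendsto (fun n => B (x n) (y n)) atTop (𝓝 0))
    {x : ℕ → E} {y : ℕ → F} (hx : WeaklyNull x) (hy : WeaklyCauchy y) :
    Tendsto (fun n => B (x n) (y n)) atTop (𝓝 0) := by
  refine tendsto_of_subseq_tendsto fun ns hns => ?_
  have hxs := hx.comp_tendsto hns
  obtain ⟨g, hg, hdiag⟩ := exists_tendsto_atTop_tendsto_diag
    (a := fun j i => B (x (ns j)) (y (ns i))) fun i => hxs (B.flip (y (ns i)))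
  refine ⟨g, ?_⟩
  simpa using
    (hB _ _ (hxs.comp_tendsto hg) ((hy.comp_tendsto hns).weaklyNull_sub hg)).add hdiag

theorem tendsto_weaklyNull_weaklyCauchy_iff :
    (∀ x y, WeaklyNull x → WeaklyCauchy y → Tendsto (fun n => B (x n) (y n)) atTop (𝓝 0)) ↔
      ∀ x y, WeaklyNull x → WeaklyNull y → Tendsto (fun n => B (x n) (y n)) atTop (𝓝 0) :=
  ⟨fun h x y hx hy => h x y hx hy.weaklyCauchy,
    fun h _ _ hx hy => tendsto_of_weaklyNull_of_weaklyCauchy B h hx hy⟩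

theorem tendsto_weaklyCauchy_weaklyNull_iff :
    (∀ x y, WeaklyCauchy x → WeaklyNull y → Tendsto (fun n => B (x n) (y n)) atTop (𝓝 0)) ↔
      ∀ x y, WeaklyNull x → WeaklyNull y → Tendsto (fun n => B (x n) (y n)) atTop (𝓝 0) :=
  ⟨fun h x y hx hy => h x y hx.weaklyCauchy hy,
    fun h _ _ hx hy => tendsto_of_weaklyNull_of_weaklyCauchy B.flip
      (fun _ _ hy hx => h _ _ hx hy) hy hx⟩

end Bilinear

section LSet

variable {E F : Type*} [NormedAddCommGroup E] [NormedSpace ℝ E]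
  [NormedAddCommGroup F] [NormedSpace ℝ F]

theorem lSet_iff_forall_tendsto {S : Set (F →L[ℝ] ℝ)} :
    LSet S ↔ ∀ z, WeaklyNull z → ∀ g : ℕ → F →L[ℝ] ℝ, (∀ n, g n ∈ S) →
      Tendsto (fun n => g n (z n)) atTop (𝓝 0) := by
  constructor
  · intro hS z hz g hg
    refine Metric.tendsto_atTop.2 fun ε hε => ?_
    obtain ⟨N, hN⟩ := hS z hz ε hε
    exact ⟨N, fun n hn => by simpa [Real.dist_eq] using hN n hn (g n) (hg n)⟩
  · intro h z hz ε hε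
    by_contra! hbad
    obtain ⟨φ, hφ, hbig⟩ := extraction_of_frequently_atTop (frequently_atTop.2 hbad)
    choose g hgS hgε using hbig
    obtain ⟨N, hN⟩ := Metric.tendsto_atTop.1
      (h _ (hz.comp_tendsto hφ.tendsto_atTop) g hgS) ε hε
    exact (hgε N).not_gt (by simpa [Real.dist_eq] using hN N le_rfl)

theorem forall_weaklyPrecompact_lSet_image_iff (T : E → F →L[ℝ] ℝ) :
    (∀ K : Set E, WeaklyPrecompact K → LSet (T '' K)) ↔
      ∀ x y, WeaklyCauchy x → WeaklyNull y → Tendsto (fun n => T (x n) (y n)) atTop (𝓝 0) := by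
  constructor
  · intro h x y hx hy
    exact lSet_iff_forall_tendsto.1 (h _ hx.weaklyPrecompact_range) y hy (fun n => T (x n))
      fun n => ⟨x n, ⟨n, rfl⟩, rfl⟩
  · intro h K hK
    refine lSet_iff_forall_tendsto.2 fun z hz g hg => ?_
    choose a haK hag using hg
    obtain rfl : g = fun n => T (a n) := funext fun n => (hag n).symm
    refine tendsto_of_subseq_tendsto fun ns hns => ?_
    obtain ⟨φ, hφ, haφ⟩ := hK (a ∘ ns) fun n => haK (ns n)
    exact ⟨φ, h _ _ haφ ((hz.comp_tendsto hns).comp_tendsto hφ.tendsto_atTop)⟩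

end LSet

theorem wpL_equivalences_general {A : Type*} [NormedRing A] [NormedAlgebra ℝ A]
    (f : A →L[ℝ] ℝ) :
    ((∀ x y : ℕ → A, WeaklyNull x → WeaklyNull y →
        Tendsto (fun n => f (x n * y n)) atTop (𝓝 0)) ↔
      (∀ x y : ℕ → A, WeaklyNull x → WeaklyCauchy y →
        Tendsto (fun n => f (x n * y n)) atTop (𝓝 0))) ∧
    ((∀ x y : ℕ → A, WeaklyNull x → WeaklyCauchy y →
        Tendsto (fun n => f (x n * y n)) atTop (𝓝 0)) ↔
      (∀ K : Set A, WeaklyPrecompact K → LSet (Tf f '' K))) := by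
  let B : A →L[ℝ] A →L[ℝ] ℝ :=
    (ContinuousLinearMap.compL ℝ A A ℝ f).comp (ContinuousLinearMap.mul ℝ A)
  exact ⟨(tendsto_weaklyNull_weaklyCauchy_iff B).symm,
    (tendsto_weaklyNull_weaklyCauchy_iff B).trans <|
      (tendsto_weaklyCauchy_weaklyNull_iff B).symm.trans
        (forall_weaklyPrecompact_lSet_image_iff (Tf f)).symm⟩

theorem wpL_equivalences {A : Type*} [NormedRing A] [NormedAlgebra ℝ A] [CompleteSpace A]
    (f : A →L[ℝ] ℝ) :
    ((∀ x y : ℕ → A, WeaklyNull x → WeaklyNull y →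
        Tendsto (fun n => f (x n * y n)) atTop (𝓝 0)) ↔
      (∀ x y : ℕ → A, WeaklyNull x → WeaklyCauchy y →
        Tendsto (fun n => f (x n * y n)) atTop (𝓝 0))) ∧
    ((∀ x y : ℕ → A, WeaklyNull x → WeaklyCauchy y →
        Tendsto (fun n => f (x n * y n)) atTop (𝓝 0)) ↔
      (∀ K : Set A, WeaklyPrecompact K → LSet (Tf f '' K))) :=
  wpL_equivalences_general f
end

section
/- Let A be a Banach algebra and f ∈ A*. Then T_f (given by T_f(a)(x) = f(ax)) is completely continuous if and only if S_f (given by S_f(a)(x) = f(xa)) maps bounded subsets of A onto L-sets in A*. -/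
open Filter Topology ENNReal

theorem tf_completelyContinuous_iff_sf_bounded_LSet {A : Type*} [NormedRing A]
    [NormedAlgebra ℝ A] [CompleteSpace A] (f : A →L[ℝ] ℝ) :
    CompletelyContinuous (Tf f) ↔
      ∀ B : Set A, Bornology.IsBounded B → LSet (Sf f '' B) := by
  have key : ∀ (a b : A), (Sf f b) a = (Tf f a) b := by
    intro a b
    simp [Sf, Tf, ContinuousLinearMap.mul_apply']
  constructor
  · intro hT B hB x hx ε hε
    obtain ⟨M, hM⟩ := hB.exists_norm_le
    have hM0 : (0:ℝ) ≤ |M| + 1 := by positivity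
    have htend := hT x hx
    rw [Metric.tendsto_atTop] at htend
    obtain ⟨N, hN⟩ := htend (ε / (|M| + 1)) (by positivity)
    refine ⟨N, fun n hn g hg => ?_⟩
    obtain ⟨b, hbB, rfl⟩ := hg
    have h1 : ‖Tf f (x n)‖ < ε / (|M| + 1) := by
      have := hN n hn
      rwa [Real.dist_eq, sub_zero, abs_of_nonneg (norm_nonneg _)] at this
    have h2 : |(Sf f b) (x n)| ≤ ‖Tf f (x n)‖ * ‖b‖ := by
      rw [key]
      exact (Tf f (x n)).le_opNorm b
    calc |(Sf f b) (x n)| ≤ ‖Tf f (x n)‖ * ‖b‖ := h2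
      _ ≤ ‖Tf f (x n)‖ * (|M| + 1) := by
          apply mul_le_mul_of_nonneg_left _ (norm_nonneg _)
          exact le_trans (hM b hbB) (le_trans (le_abs_self M) (by linarith))
      _ < ε / (|M| + 1) * (|M| + 1) := by
          apply mul_lt_mul_of_pos_right h1 (by positivity)
      _ = ε := by field_simp
  · intro h x hx
    have hL := h (Metric.closedBall (0:A) 1) Metric.isBounded_closedBall x hx
    rw [Metric.tendsto_atTop]
    intro ε hε
    obtain ⟨N, hN⟩ := hL (ε / 2) (by positivity)
    refine ⟨N, fun n hn => ?_⟩
    rw [Real.dist_eq, sub_zero, abs_of_nonneg (norm_nonneg _)]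
    have hbound : ‖Tf f (x n)‖ ≤ ε / 2 := by
      apply ContinuousLinearMap.opNorm_le_bound _ (le_of_lt (half_pos hε))
      intro b
      rcases eq_or_ne b 0 with rfl | hb
      · simp
      · have hbn : (0:ℝ) < ‖b‖ := norm_pos_iff.mpr hb
        have hmem : (‖b‖⁻¹ • b) ∈ Metric.closedBall (0:A) 1 := by
          simp [norm_smul, abs_of_pos (inv_pos.mpr hbn), inv_mul_cancel₀ hbn.ne']
        have hg := hN n hn _ ⟨_, hmem, rfl⟩
        have heq : (Sf f (‖b‖⁻¹ • b)) (x n) = ‖b‖⁻¹ * (Tf f (x n)) b := by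
          simp [Sf, Tf, ContinuousLinearMap.mul_apply', mul_smul_comm]
        rw [heq, abs_mul, abs_of_pos (inv_pos.mpr hbn)] at hg
        have : |(Tf f (x n)) b| ≤ ε / 2 * ‖b‖ := by
          rw [inv_mul_eq_div, div_lt_iff₀ hbn] at hg
          linarith
        simpa [Real.norm_eq_abs] using this
    linarith [half_lt_self hε]
end

section
/- Let A be a Banach algebra and f ∈ A* such that f(x_n y_n) → 0 for all weakly null sequences (x_n), (y_n) in A, but T_f is not completely continuous. Then there exist a sequence (w_n) in A that is equivalent to the unit vector basis of ℓ¹ and a weakly null sequence (u_n) in A such that f(u_m w_n) = δ_{mn} for all m ≥ n. -/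
open Filter Topology ENNReal

/-!
Failure of complete continuity of `T_f` gives a weakly null `(a n)` and `(b n)` in the unit ball
with `ε ≤ f (a n * b n)`. No subsequence of `(b n)` is weakly Cauchy: otherwise, pairing `a` far
out with the differences `b (φ k) - b k` gives weakly null sequences whose products `f (x k * y k)`
stay above `ε / 2`. Hence, by Rosenthal's ℓ¹ theorem, a subsequence of `(b n)` is an ℓ¹ sequence.

Rosenthal's theorem comes from a combinatorial dichotomy for the sets of unit functionals lying
above `s`, respectively below `r`, at `b n`: every infinite set of indices contains an infinite
subset along which either no functional oscillates or these sets are Boolean independent. The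
dichotomy is proved by a Ramsey-type construction of the independent set. Diagonalizing over all rational `r < s`, the first alternative
everywhere yields a weakly Cauchy subsequence; an independent set yields the lower ℓ¹ estimate by
testing a combination against two functionals that follow, respectively oppose, its signs.

The sequence `(u m)` is a gliding hump: `u m` is a multiple of `a (t m)` corrected, by a
combination of the earlier `u`'s, to be annihilated by the earlier functionals `f (· * w n)`.
Since `a` is weakly null these corrections tend to zero, so `(u m)` is weakly null.
-/

section NormedSpace

variable {E : Type*} [NormedAddCommGroup E] [NormedSpace ℝ E]

theorem ContinuousLinearMap.exists_norm_le_one_lt_apply (g : E →L[ℝ] ℝ) {r : ℝ} (hr : r < ‖g‖) :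
    ∃ y, ‖y‖ ≤ 1 ∧ r < g y := by
  obtain ⟨y, hy, hry⟩ := g.exists_lt_apply_of_lt_opNorm hr
  rw [Real.norm_eq_abs] at hry
  rcases le_or_gt 0 (g y) with h | h
  · exact ⟨y, hy.le, by rwa [abs_of_nonneg h] at hry⟩
  · exact ⟨-y, (norm_neg y).trans_le hy.le, by rw [abs_of_neg h] at hry; simpa using hry⟩

theorem IsL1Sequence.comp_injective {w : ℕ → E} (hw : IsL1Sequence w) {ρ : ℕ → ℕ}
    (hρ : ρ.Injective) : IsL1Sequence (w ∘ ρ) := by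
  classical
  obtain ⟨c, C, hc, h⟩ := hw
  refine ⟨c, C, hc, fun F lam => ?_⟩
  have hinj : ∀ x ∈ F, ∀ y ∈ F, ρ x = ρ y → x = y := fun x _ y _ hxy => hρ hxy
  simpa only [Finset.sum_image hinj, Function.comp_apply, Function.leftInverse_invFun hρ _]
    using h (F.image ρ) (lam ∘ Function.invFun ρ)

theorem weaklyCauchy_of_forall_norm_le_one {x : ℕ → E}
    (h : ∀ g : E →L[ℝ] ℝ, ‖g‖ ≤ 1 → ∃ L, Tendsto (fun n => g (x n)) atTop (𝓝 L)) :
    WeaklyCauchy x := by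
  intro g
  have hc : 0 < ‖g‖ + 1 := by positivity
  obtain ⟨L, hL⟩ := h ((‖g‖ + 1)⁻¹ • g) (by
    rw [norm_smul, Real.norm_of_nonneg (inv_pos.2 hc).le, inv_mul_le_iff₀ hc]
    linarith)
  refine ⟨(‖g‖ + 1) * L, ?_⟩
  simpa [← mul_assoc, mul_inv_cancel₀ hc.ne'] using hL.const_mul (‖g‖ + 1)

theorem WeaklyNull.comp_tendsto_s6 {a : ℕ → E} (ha : WeaklyNull a) {t : ℕ → ℕ}
    (ht : Tendsto t atTop atTop) : WeaklyNull (a ∘ t) :=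
  fun g => (ha g).comp ht

theorem WeaklyNull.of_tendsto_sub {a x : ℕ → E} (ha : WeaklyNull a)
    (h : Tendsto (fun k => x k - a k) atTop (𝓝 0)) : WeaklyNull x := by
  intro g
  have hg := (g.continuous.tendsto 0).comp h
  rw [map_zero] at hg
  simpa using hg.add (ha g)

theorem WeaklyNull.smul_of_bounded {a : ℕ → E} (ha : WeaklyNull a) {s : ℕ → ℝ} {C : ℝ}
    (hs : ∀ n, |s n| ≤ C) : WeaklyNull fun n => s n • a n := by
  intro g
  simpa [mul_comm] using (ha g).zero_mul_isBoundedUnder_le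
    (isBoundedUnder_of ⟨C, fun n => (Real.norm_eq_abs (s n)).trans_le (hs n)⟩)

theorem WeaklyNull.exists_tendsto_sub_forall_apply_eq_zero {a : ℕ → E} (ha : WeaklyNull a)
    (φ : ℕ → E →L[ℝ] ℝ) (v : ℕ → E) (m : ℕ)
    (hφv : ∀ p q, p ≤ q → q < m → φ p (v q) = if p = q then 1 else 0) :
    ∃ x : ℕ → E, Tendsto (fun k => x k - a k) atTop (𝓝 0) ∧ ∀ k, ∀ p < m, φ p (x k) = 0 := by
  induction m with
  | zero => exact ⟨a, by simp, fun _ _ h => absurd h (Nat.not_lt_zero _)⟩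
  | succ m ih =>
    obtain ⟨x, hx, hx0⟩ := ih fun p q hpq hq => hφv p q hpq (hq.trans m.lt_succ_self)
    -- subtracting `φ m (x k) • v m` kills `φ m` and, by triangularity, keeps the earlier zeros
    refine ⟨fun k => x k - φ m (x k) • v m, ?_, fun k p hp => ?_⟩
    · have hc : Tendsto (fun k => φ m (x k)) atTop (𝓝 0) := ha.of_tendsto_sub hx (φ m)
      simpa [sub_right_comm] using hx.sub (hc.smul_const (v m))
    · rcases (Nat.lt_succ_iff.mp hp).lt_or_eq with hp | rfl
      · simp [hx0 k p hp, hφv p m hp.le m.lt_succ_self, hp.ne]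
      · simp [hφv p p le_rfl p.lt_succ_self]

end NormedSpace

section Oscillation

variable {S β : Type*} (C : β → ℕ → Set S)

def Oscillates (M : Set ℕ) (x : S) : Prop :=
  ∀ c, {n | n ∈ M ∧ x ∈ C c n}.Infinite

def IsLargeAlong (D : Set S) (M : Set ℕ) : Prop :=
  ∀ N ⊆ M, N.Infinite → ∃ x ∈ D, Oscillates C N x

def IsIndependent (T : Set ℕ) : Prop :=
  ∀ F : Finset ℕ, ↑F ⊆ T → ∀ σ : ℕ → β, (⋂ n ∈ F, C (σ n) n).Nonempty

variable {C}

theorem Oscillates.mono {M M' : Set ℕ} {x : S} (h : Oscillates C M x) (hM : M ⊆ M') :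
    Oscillates C M' x :=
  fun c => (h c).mono fun _ hn => ⟨hM hn.1, hn.2⟩

theorem Oscillates.sdiff {M s : Set ℕ} {x : S} (h : Oscillates C M x) (hs : s.Finite) :
    Oscillates C (M \ s) x :=
  fun c => ((h c).sdiff hs).mono fun _ hn => ⟨⟨hn.1.1, hn.2⟩, hn.1.2⟩

theorem IsLargeAlong.nonempty {D : Set S} {M : Set ℕ} (h : IsLargeAlong C D M) (hM : M.Infinite) :
    D.Nonempty :=
  let ⟨x, hx, _⟩ := h M subset_rfl hM
  ⟨x, hx⟩

theorem IsLargeAlong.exists_extension [Finite β] {ι : Type*} [Finite ι] {D : ι → Set S}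
    {M : Set ℕ} (hM : M.Infinite) (hD : ∀ i, IsLargeAlong C (D i) M) :
    ∃ n ∈ M, ∃ N ⊆ M, N.Infinite ∧ (∀ k ∈ N, n < k) ∧
      ∀ i c, IsLargeAlong C (D i ∩ C c n) N := by
  -- Otherwise choose shrinking reservoirs `Ts k`, points `n (Ts k)` and at each stage a pattern
  -- `D i ∩ C c (n (Ts k))` oscillating along nothing beyond; a recurring `(i, c)` then contradicts
  -- the largeness of `D i` along the chosen points.
  by_contra! hcon
  have step : ∀ T ⊆ M, T.Infinite → ∃ n ∈ T, ∃ T' ⊆ T, T'.Infinite ∧ (∀ k ∈ T', n < k) ∧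
      ∃ i c, ∀ x ∈ D i ∩ C c n, ¬ Oscillates C T' x := by
    intro T hTM hT
    obtain ⟨n, hn⟩ := hT.nonempty
    obtain ⟨i, c, hic⟩ := hcon n (hTM hn) (T \ Set.Iic n) (Set.sdiff_subset.trans hTM)
      (hT.sdiff (Set.finite_Iic n)) fun k hk => not_le.1 hk.2
    simp only [IsLargeAlong, not_forall, not_exists, not_and] at hic
    obtain ⟨T', hT', hT'inf, hbad⟩ := hic
    exact ⟨n, hn, T', hT'.trans Set.sdiff_subset, hT'inf, fun k hk => not_le.1 (hT' hk).2, i, c,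
      fun x hx => hbad x hx⟩
  choose! n hnT next hnext hnext_inf hnext_gt hbad using step
  set Ts : ℕ → Set ℕ := fun k => next^[k] M
  have hsucc : ∀ k, Ts (k + 1) = next (Ts k) := fun k => Function.iterate_succ_apply' _ _ _
  have hTs : ∀ k, Ts k ⊆ M ∧ (Ts k).Infinite := by
    intro k
    induction k with
    | zero => exact ⟨subset_rfl, hM⟩
    | succ k ih => exact hsucc k ▸ ⟨(hnext _ ih.1 ih.2).trans ih.1, hnext_inf _ ih.1 ih.2⟩
  have hanti : Antitone Ts :=
    antitone_nat_of_succ_le fun k => hsucc k ▸ hnext _ (hTs k).1 (hTs k).2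
  have hmem : ∀ k, n (Ts k) ∈ Ts k := fun k => hnT _ (hTs k).1 (hTs k).2
  have hgt : ∀ k, ∀ j ∈ Ts (k + 1), n (Ts k) < j := fun k j hj =>
    hnext_gt _ (hTs k).1 (hTs k).2 j (hsucc k ▸ hj)
  have hn : StrictMono fun k => n (Ts k) :=
    strictMono_nat_of_lt_succ fun k => hgt k _ (hmem (k + 1))
  choose i c hic using fun k => hbad (Ts k) (hTs k).1 (hTs k).2
  obtain ⟨⟨i₀, c₀⟩, hfib⟩ := Finite.exists_infinite_fiber fun k => (i k, c k)
  set K := (fun k => (i k, c k)) ⁻¹' {(i₀, c₀)}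
  obtain ⟨x, hxD, hx⟩ := hD i₀ ((fun k => n (Ts k)) '' K)
    (Set.image_subset_iff.2 fun k _ => (hTs k).1 (hmem k))
    ((Set.infinite_coe_iff.1 hfib).image hn.injective.injOn)
  obtain ⟨_, ⟨k, hkK, rfl⟩, hxk⟩ := (hx c₀).nonempty
  obtain ⟨rfl, rfl⟩ := Prod.ext_iff.1 hkK
  -- `x` still oscillates beyond `n (Ts k)`, where the image lies in `Ts (k + 1)`
  refine hic k x ⟨hxD, hxk⟩ ((hx.sdiff (Set.finite_Iic (n (Ts k)))).mono ?_)
  rintro _ ⟨⟨l, -, rfl⟩, hl⟩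
  exact hsucc k ▸ hanti (hn.lt_iff_lt.1 (not_le.1 hl)) (hmem l)

theorem finite_range_biInter [Finite β] (C : β → ℕ → Set S) (F : Finset ℕ) :
    (Set.range fun σ : ℕ → β => ⋂ n ∈ F, C (σ n) n).Finite :=
  (Set.finite_range fun τ : F → β => ⋂ n : F, C (τ n) n).subset <| by
    rintro _ ⟨σ, rfl⟩
    exact ⟨fun n => σ n, by ext; simp⟩

variable (C) in
/-- `F` is the part of an independent subset of `M` chosen so far, `N` the reservoir for the
rest. -/
def IsIndependenceStage (M : Set ℕ) (F : Finset ℕ) (N : Set ℕ) : Prop :=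
  ↑F ⊆ M ∧ N ⊆ M ∧ N.Infinite ∧ (∀ a ∈ F, ∀ k ∈ N, a < k) ∧
    ∀ σ : ℕ → β, IsLargeAlong C (⋂ n ∈ F, C (σ n) n) N

theorem IsIndependenceStage.exists_insert [Finite β] {M N : Set ℕ} {F : Finset ℕ}
    (h : IsIndependenceStage C M F N) :
    ∃ n ∈ N, ∃ N', IsIndependenceStage C M (insert n F) N' := by
  classical
  obtain ⟨hFM, hNM, hN, hFN, hlarge⟩ := h
  have := (finite_range_biInter C F).to_subtype
  obtain ⟨n, hn, N', hN'N, hN', hnN', hext⟩ :=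
    IsLargeAlong.exists_extension (ι := Set.range fun σ : ℕ → β => ⋂ n ∈ F, C (σ n) n)
      (D := Subtype.val) hN fun ⟨_, σ, hσ⟩ => by subst hσ; exact hlarge σ
  refine ⟨n, hn, N', ?_, hN'N.trans hNM, hN', ?_, fun σ => ?_⟩
  · simpa [Set.insert_subset_iff] using ⟨hNM hn, hFM⟩
  · simpa using ⟨hnN', fun a ha k hk => hFN a ha k (hN'N hk)⟩
  · rw [Finset.set_biInter_insert, Set.inter_comm]
    exact hext ⟨_, σ, rfl⟩ (σ n)

theorem IsLargeAlong.exists_isIndependent [Finite β] {M : Set ℕ} (hM : M.Infinite)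
    (hL : IsLargeAlong C Set.univ M) : ∃ T ⊆ M, T.Infinite ∧ IsIndependent C T := by
  classical
  have hstart : IsIndependenceStage C M ∅ M :=
    ⟨by simp, subset_rfl, hM, by simp, fun σ => by simpa using hL⟩
  choose n hn next hnext using fun q : {q : Finset ℕ × Set ℕ // IsIndependenceStage C M q.1 q.2} =>
    q.2.exists_insert
  set stage : ℕ → {q : Finset ℕ × Set ℕ // IsIndependenceStage C M q.1 q.2} :=
    fun k => (fun q => ⟨(insert (n q) q.1.1, next q), hnext q⟩)^[k] ⟨(∅, M), hstart⟩
  have hsucc : ∀ k, (stage (k + 1)).1 = (insert (n (stage k)) (stage k).1.1, next (stage k)) :=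
    fun k => congrArg Subtype.val (Function.iterate_succ_apply' _ _ _)
  have hF : Monotone fun k => ((stage k).1.1 : Set ℕ) := monotone_nat_of_le_succ fun k => by
    simp [hsucc k, Set.subset_insert]
  have hn_mem : ∀ k, n (stage k) ∈ (stage (k + 1)).1.1 := fun k => by simp [hsucc k]
  have hn_mono : StrictMono fun k => n (stage k) := strictMono_nat_of_lt_succ fun k => by
    obtain ⟨-, -, -, hbelow, -⟩ := (stage (k + 1)).2
    exact hbelow _ (hn_mem k) _ (hn (stage (k + 1)))
  refine ⟨⋃ k, (stage k).1.1, Set.iUnion_subset fun k => (stage k).2.1, ?_, fun G hG σ => ?_⟩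
  · exact (Set.infinite_range_of_injective hn_mono.injective).mono
      (Set.range_subset_iff.2 fun k => Set.mem_iUnion.2 ⟨k + 1, hn_mem k⟩)
  · obtain ⟨K, hK⟩ := hF.directed_le.exists_mem_subset_of_finset_subset_biUnion hG
    obtain ⟨-, -, hN, -, hlarge⟩ := (stage K).2
    obtain ⟨x, hx⟩ := (hlarge σ).nonempty hN
    simp only [Set.mem_iInter] at hx
    exact ⟨x, Set.mem_iInter₂.2 fun m hm => hx m (hK hm)⟩

theorem exists_not_oscillates_or_isIndependent [Finite β] {M : Set ℕ} (hM : M.Infinite) :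
    (∃ N ⊆ M, N.Infinite ∧ ∀ x, ¬ Oscillates C N x) ∨ ∃ T ⊆ M, T.Infinite ∧ IsIndependent C T := by
  by_cases hL : IsLargeAlong C Set.univ M
  · exact Or.inr (hL.exists_isIndependent hM)
  · simp only [IsLargeAlong, Set.mem_univ, true_and, not_forall, not_exists] at hL
    obtain ⟨N, hNM, hN, hno⟩ := hL
    exact Or.inl ⟨N, hNM, hN, hno⟩

theorem IsIndependent.comp_injective {T : Set ℕ} (hT : IsIndependent C T) {ρ : ℕ → ℕ}
    (hρ : ρ.Injective) (hρT : ∀ k, ρ k ∈ T) : IsIndependent (fun c k => C c (ρ k)) Set.univ := by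
  classical
  intro F _ σ
  obtain ⟨x, hx⟩ := hT (F.image ρ)
    (by rw [Finset.coe_image]; exact Set.image_subset_iff.2 fun k _ => hρT k)
    (σ ∘ Function.invFun ρ)
  simp only [Finset.mem_image, Set.iInter_exists, Set.biInter_and', Set.iInter_iInter_eq_right,
    Function.comp_apply, Function.leftInverse_invFun hρ _, Set.mem_iInter] at hx
  exact ⟨x, Set.mem_iInter₂.2 hx⟩

end Oscillation

theorem exists_strictMono_diagonal {P : ℕ → Set ℕ → Prop}
    (h : ∀ k M, M.Infinite → ∃ N ⊆ M, N.Infinite ∧ P k N) :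
    ∃ φ : ℕ → ℕ, StrictMono φ ∧ ∀ k, ∃ N, P k N ∧ ∀ j ≥ k, φ j ∈ N := by
  choose! next hsub hinf hP using h
  let Ns : ℕ → Set ℕ := fun k => Nat.rec Set.univ (fun k N => next k N) k
  have hNs : ∀ k, (Ns k).Infinite := fun k => by
    induction k with
    | zero => exact Set.infinite_univ
    | succ k ih => exact hinf k _ ih
  have hanti : Antitone Ns := antitone_nat_of_succ_le fun k => hsub k _ (hNs k)
  obtain ⟨φ, hφ, hφN⟩ := extraction_forall_of_frequently fun k =>
    Nat.frequently_atTop_iff_infinite.2 (hNs (k + 1))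
  exact ⟨φ, hφ, fun k =>
    ⟨Ns (k + 1), hP k _ (hNs k), fun j hj => hanti (Nat.succ_le_succ hj) (hφN j)⟩⟩

theorem StrictMono.infinite_setOf_of_frequently {φ : ℕ → ℕ} (hφ : StrictMono φ) {N : Set ℕ}
    {k : ℕ} (hN : ∀ j ≥ k, φ j ∈ N) {p : ℕ → Prop} (h : ∃ᶠ j in atTop, p (φ j)) :
    {n | n ∈ N ∧ p n}.Infinite := by
  refine ((Nat.frequently_atTop_iff_infinite.1 (h.and_eventually (eventually_ge_atTop k))).image
    hφ.injective.injOn).mono ?_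
  rintro _ ⟨j, ⟨hj, hjk⟩, rfl⟩
  exact ⟨hN j hjk, hj⟩

section Rosenthal

variable {E : Type*} [NormedAddCommGroup E] [NormedSpace ℝ E]

/-- The unit functionals that are `> s` (for `c = true`), respectively `< r`, at `w n`. -/
def crossingSets (w : ℕ → E) (r s : ℝ) (c : Bool) (n : ℕ) : Set (E →L[ℝ] ℝ) :=
  {g | ‖g‖ ≤ 1 ∧ cond c (s < g (w n)) (g (w n) < r)}

theorem IsIndependent.isL1Sequence {w : ℕ → E} {K r s : ℝ} (hw : ∀ n, ‖w n‖ ≤ K) (hrs : r < s)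
    (h : IsIndependent (crossingSets w r s) Set.univ) : IsL1Sequence w := by
  refine ⟨(s - r) / 2, K, by linarith, fun F lam => ⟨?_, ?_⟩⟩
  · rcases F.eq_empty_or_nonempty with rfl | ⟨n₀, hn₀⟩
    · simp
    -- `g₁` follows the signs of `lam` on `F`, `g₂` the opposite signs
    obtain ⟨g₁, hg₁⟩ := h F (Set.subset_univ _) fun n => decide (0 ≤ lam n)
    obtain ⟨g₂, hg₂⟩ := h F (Set.subset_univ _) fun n => decide (lam n < 0)
    simp only [Set.mem_iInter, crossingSets, Set.mem_ofPred_eq] at hg₁ hg₂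
    have hterm : ∀ n ∈ F, |lam n| * (s - r) ≤ lam n * (g₁ - g₂) (w n) := by
      intro n hn
      have h₁ := (hg₁ n hn).2
      have h₂ := (hg₂ n hn).2
      rcases le_or_gt 0 (lam n) with hl | hl
      · simp only [hl, decide_true, cond_true, not_lt.2 hl, decide_false, cond_false] at h₁ h₂
        rw [abs_of_nonneg hl, sub_apply]
        exact mul_le_mul_of_nonneg_left (by linarith) hl
      · simp only [not_le.2 hl, hl, decide_true, cond_true, decide_false, cond_false] at h₁ h₂
        rw [abs_of_neg hl, sub_apply]
        nlinarith
    have hnorm : ‖g₁ - g₂‖ ≤ 2 :=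
      (norm_sub_le _ _).trans (by linarith [(hg₁ n₀ hn₀).1, (hg₂ n₀ hn₀).1])
    calc (s - r) / 2 * ∑ n ∈ F, |lam n| = (∑ n ∈ F, |lam n| * (s - r)) / 2 := by
          rw [← Finset.sum_mul]; ring
      _ ≤ (∑ n ∈ F, lam n * (g₁ - g₂) (w n)) / 2 := by gcongr ?_ / 2; exact Finset.sum_le_sum hterm
      _ = (g₁ - g₂) (∑ n ∈ F, lam n • w n) / 2 := by simp [map_sum]
      _ ≤ ‖g₁ - g₂‖ * ‖∑ n ∈ F, lam n • w n‖ / 2 := by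
          gcongr; exact (le_abs_self _).trans ((g₁ - g₂).le_opNorm _)
      _ ≤ ‖∑ n ∈ F, lam n • w n‖ := by nlinarith [norm_nonneg (∑ n ∈ F, lam n • w n)]
  · calc ‖∑ n ∈ F, lam n • w n‖ ≤ ∑ n ∈ F, |lam n| * K := by
          refine (norm_sum_le _ _).trans (Finset.sum_le_sum fun n _ => ?_)
          rw [norm_smul, Real.norm_eq_abs]
          exact mul_le_mul_of_nonneg_left (hw n) (abs_nonneg _)
      _ = K * ∑ n ∈ F, |lam n| := by rw [← Finset.sum_mul, mul_comm]

theorem exists_strictMono_weaklyCauchy_or_isL1Sequence {b : ℕ → E} {K : ℝ}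
    (hb : ∀ n, ‖b n‖ ≤ K) :
    ∃ φ : ℕ → ℕ, StrictMono φ ∧ (WeaklyCauchy (b ∘ φ) ∨ IsL1Sequence (b ∘ φ)) := by
  by_cases hind : ∃ r s : ℝ, r < s ∧ ∃ T : Set ℕ, T.Infinite ∧ IsIndependent (crossingSets b r s) T
  · obtain ⟨r, s, hrs, T, hT, hTind⟩ := hind
    refine ⟨Nat.nth (· ∈ T), Nat.nth_strictMono hT, Or.inr ?_⟩
    exact (hTind.comp_injective (Nat.nth_strictMono hT).injective
      (Nat.nth_mem_of_infinite hT)).isL1Sequence (fun n => hb _) hrs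
  push Not at hind
  obtain ⟨e, he⟩ : ∃ e : ℕ → ℚ × ℚ, e.Surjective := exists_surjective_nat _
  obtain ⟨φ, hφ, hφN⟩ := exists_strictMono_diagonal (P := fun k N => ((e k).1 : ℝ) < (e k).2 →
      ∀ g, ¬ Oscillates (crossingSets b (e k).1 (e k).2) N g) fun k M hM => by
    by_cases hrs : ((e k).1 : ℝ) < (e k).2
    · obtain ⟨N, hNM, hN, hno⟩ | ⟨T, -, hT, hTind⟩ :=
        exists_not_oscillates_or_isIndependent (C := crossingSets b (e k).1 (e k).2) hM
      · exact ⟨N, hNM, hN, fun _ => hno⟩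
      · exact absurd hTind (hind _ _ hrs T hT)
    · exact ⟨M, subset_rfl, hM, fun h => absurd h hrs⟩
  refine ⟨φ, hφ, Or.inl (weaklyCauchy_of_forall_norm_le_one fun g hg => ?_)⟩
  have hbound : ∀ j, |g (b (φ j))| ≤ K := fun j =>
    (g.le_opNorm _).trans ((mul_le_of_le_one_left (norm_nonneg _) hg).trans (hb _))
  refine tendsto_of_no_upcrossings Rat.denseRange_cast ?_
    (isBoundedUnder_of ⟨K, fun j => (abs_le.1 (hbound j)).2⟩)
    (isBoundedUnder_of ⟨-K, fun j => (abs_le.1 (hbound j)).1⟩)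
  rintro _ ⟨r, rfl⟩ _ ⟨s, rfl⟩ hrs ⟨hr, hs⟩
  obtain ⟨k, hk⟩ := he (r, s)
  obtain ⟨N, hNk, hφN⟩ := hφN k
  simp only [hk] at hNk
  refine hNk hrs g fun c => ?_
  cases c
  · exact hφ.infinite_setOf_of_frequently hφN (hr.mono fun j hj => ⟨hg, hj⟩)
  · exact hφ.infinite_setOf_of_frequently hφN (hs.mono fun j hj => ⟨hg, hj⟩)

end Rosenthal

noncomputable def recSeq {α : Type*} [Inhabited α] (next : ℕ → (ℕ → α) → α) (n : ℕ) : α :=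
  next n fun i => if i < n then recSeq next i else default

theorem recSeq_eq {α : Type*} [Inhabited α] (next : ℕ → (ℕ → α) → α) (n : ℕ) :
    recSeq next n = next n fun i => if i < n then recSeq next i else default := by
  rw [recSeq]

theorem exists_seq_of_forall_exists_next {α : Type*} [Nonempty α] (P : ℕ → α → Prop)
    (r : α → α → Prop)
    (h : ∀ n (g : ℕ → α), (∀ k < n, P k (g k)) → (∀ j k, j < k → k < n → r (g j) (g k)) →
      ∃ a, P n a ∧ ∀ k < n, r (g k) a) :
    ∃ f : ℕ → α, (∀ n, P n (f n)) ∧ ∀ j k, j < k → r (f j) (f k) := by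
  classical
  inhabit α
  choose! next hnext using h
  set f := recSeq next
  have key : ∀ n, P n (f n) ∧ ∀ k < n, r (f k) (f n) := by
    intro n
    induction n using Nat.strong_induction_on with
    | _ n ih =>
      set g : ℕ → α := fun i => if i < n then f i else default
      have hg : ∀ k < n, g k = f k := fun k hk => if_pos hk
      have hfn : f n = next n g := recSeq_eq next n
      obtain ⟨hP, hr⟩ := hnext n g (fun k hk => hg k hk ▸ (ih k hk).1)
        (fun j k hjk hkn => hg j (hjk.trans hkn) ▸ hg k hkn ▸ (ih k hkn).2 j hjk)
      exact ⟨hfn ▸ hP, fun k hk => hfn ▸ hg k hk ▸ hr k hk⟩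
  exact ⟨f, fun n => (key n).1, fun j k hjk => (key k).2 j hjk⟩

section Biorthogonal

variable {E : Type*} [NormedAddCommGroup E] [NormedSpace ℝ E] {ψ : ℕ → E →L[ℝ] ℝ} {K ε : ℝ}
  {a : ℕ → E}

theorem exists_next_biorthogonal (hψ : ∀ n, ‖ψ n‖ ≤ K) (ha : WeaklyNull a) (hε : 0 < ε)
    (hdiag : ∀ n, ε ≤ ψ n (a n)) (m : ℕ) (t : ℕ → ℕ) (u : ℕ → E)
    (htu : ∀ p q, p ≤ q → q < m → ψ (t p) (u q) = if p = q then 1 else 0) :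
    ∃ k v, ψ k v = 1 ∧ (∃ s, |s| ≤ 2 / ε ∧ ‖v - s • a k‖ ≤ 1 / (m + 1)) ∧
      ∀ p < m, t p < k ∧ ψ (t p) v = 0 := by
  obtain ⟨x, hx, hx0⟩ := ha.exists_tendsto_sub_forall_apply_eq_zero (fun p => ψ (t p)) u m htu
  have hψx : Tendsto (fun k => ψ k (x k - a k)) atTop (𝓝 0) := by
    refine squeeze_zero_norm (fun k => ((ψ k).le_opNorm _).trans
      (mul_le_mul_of_nonneg_right (hψ k) (norm_nonneg _))) ?_
    simpa using hx.norm.const_mul K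
  have hlate : ∀ᶠ k in atTop, ∀ p ∈ Finset.range m, t p < k :=
    (Filter.eventually_all_finset _).2 fun p _ => eventually_gt_atTop (t p)
  have hclose : ∀ᶠ k in atTop, ‖x k - a k‖ ≤ ε / (2 * (m + 1)) :=
    hx.norm.eventually (ge_mem_nhds (by rw [norm_zero]; positivity))
  have hdiag' : ∀ᶠ k in atTop, -(ε / 2) ≤ ψ k (x k - a k) :=
    hψx.eventually (le_mem_nhds (by linarith))
  obtain ⟨k, hkt, hk, hkd⟩ := (hlate.and (hclose.and hdiag')).exists
  have hd : ε / 2 ≤ ψ k (x k) := by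
    have := hdiag k
    rw [map_sub] at hkd
    linarith
  have hd0 : 0 < ψ k (x k) := by linarith
  have hinv : (ψ k (x k))⁻¹ ≤ 2 / ε := by
    rw [← inv_div]; exact inv_anti₀ (by positivity) hd
  refine ⟨k, (ψ k (x k))⁻¹ • x k, by simp [hd0.ne'], ⟨(ψ k (x k))⁻¹, ?_, ?_⟩,
    fun p hp => ⟨hkt p (Finset.mem_range.2 hp), by simp [hx0 k p hp]⟩⟩
  · rwa [abs_of_pos (inv_pos.2 hd0)]
  · rw [← smul_sub, norm_smul, Real.norm_of_nonneg (inv_pos.2 hd0).le]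
    calc (ψ k (x k))⁻¹ * ‖x k - a k‖ ≤ 2 / ε * (ε / (2 * (m + 1))) :=
          mul_le_mul hinv hk (norm_nonneg _) (by positivity)
      _ = 1 / (m + 1) := by field_simp

theorem exists_strictMono_weaklyNull_biorthogonal (hψ : ∀ n, ‖ψ n‖ ≤ K) (ha : WeaklyNull a)
    (hε : 0 < ε) (hdiag : ∀ n, ε ≤ ψ n (a n)) :
    ∃ t : ℕ → ℕ, StrictMono t ∧ ∃ u : ℕ → E, WeaklyNull u ∧
      ∀ m n, n ≤ m → ψ (t n) (u m) = if m = n then 1 else 0 := by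
  obtain ⟨tu, hP, hr⟩ := exists_seq_of_forall_exists_next
    (fun m (kv : ℕ × E) => ψ kv.1 kv.2 = 1 ∧ ∃ s, |s| ≤ 2 / ε ∧ ‖kv.2 - s • a kv.1‖ ≤ 1 / (m + 1))
    (fun kv kv' => kv.1 < kv'.1 ∧ ψ kv.1 kv'.2 = 0) fun m g hP hr => by
      obtain ⟨k, v, hone, hclose, hlater⟩ := exists_next_biorthogonal hψ ha hε hdiag m
        (fun p => (g p).1) (fun p => (g p).2) fun p q hpq hq => by
          rcases hpq.lt_or_eq with hpq | rfl
          · simp [(hr p q hpq hq).2, hpq.ne]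
          · simp [(hP p hq).1]
      exact ⟨(k, v), ⟨hone, hclose⟩, hlater⟩
  choose s hs hsa using fun m => (hP m).2
  have ht : StrictMono fun n => (tu n).1 := fun j k hjk => (hr j k hjk).1
  refine ⟨_, ht, fun n => (tu n).2, ?_, fun m n hnm => ?_⟩
  · refine ((ha.comp_tendsto_s6 ht.tendsto_atTop).smul_of_bounded hs).of_tendsto_sub ?_
    exact squeeze_zero_norm hsa tendsto_one_div_add_atTop_nhds_zero_nat
  · rcases hnm.lt_or_eq with hnm | rfl
    · simp [(hr n m hnm).2, hnm.ne']
    · simp [(hP n).1]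

end Biorthogonal

section BanachAlgebra

variable {A : Type*} [NormedRing A] [NormedAlgebra ℝ A]

theorem norm_Sf_le (f : A →L[ℝ] ℝ) (y : A) : ‖Sf f y‖ ≤ ‖f‖ * ‖y‖ :=
  ContinuousLinearMap.opNorm_le_bound _ (by positivity) fun x =>
    calc ‖f (x * y)‖ ≤ ‖f‖ * (‖x‖ * ‖y‖) :=
          (f.le_opNorm _).trans (mul_le_mul_of_nonneg_left (norm_mul_le x y) (norm_nonneg f))
      _ = ‖f‖ * ‖y‖ * ‖x‖ := by ring

theorem exists_weaklyNull_of_not_completelyContinuous (f : A →L[ℝ] ℝ)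
    (hncc : ¬ CompletelyContinuous (Tf f)) :
    ∃ ε > 0, ∃ a b : ℕ → A, WeaklyNull a ∧ (∀ n, ‖b n‖ ≤ 1) ∧ ∀ n, ε ≤ f (a n * b n) := by
  simp only [CompletelyContinuous, not_forall] at hncc
  obtain ⟨x, hx, hnt⟩ := hncc
  obtain ⟨ε, hε, hfreq⟩ : ∃ ε > 0, ∃ᶠ n in atTop, ε ≤ ‖Tf f (x n)‖ := by
    by_contra! h
    exact hnt (Metric.tendsto_nhds.2 fun ε hε => (h ε hε).mono fun n hn => by simpa using hn)
  obtain ⟨φ, hφ, hφε⟩ := extraction_of_frequently_atTop hfreq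
  choose b hb hab using fun n =>
    (Tf f (x (φ n))).exists_norm_le_one_lt_apply ((half_lt_self hε).trans_le (hφε n))
  exact ⟨ε / 2, half_pos hε, x ∘ φ, b, hx.comp_tendsto_s6 hφ.tendsto_atTop, hb, fun n => (hab n).le⟩

theorem not_weaklyCauchy_of_le_apply_mul (f : A →L[ℝ] ℝ)
    (hwpL : ∀ x y : ℕ → A, WeaklyNull x → WeaklyNull y →
      Tendsto (fun n => f (x n * y n)) atTop (𝓝 0))
    {ε : ℝ} (hε : 0 < ε) {a b : ℕ → A} (ha : WeaklyNull a) (hab : ∀ n, ε ≤ f (a n * b n)) :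
    ¬ WeaklyCauchy b := by
  intro hb
  obtain ⟨φ, hφ, hsmall⟩ := extraction_forall_of_eventually fun k =>
    (ha (Sf f (b k))).eventually (gt_mem_nhds (half_pos hε))
  have hy : WeaklyNull fun k => b (φ k) - b k := fun g => by
    obtain ⟨L, hL⟩ := hb g
    simpa using (hL.comp hφ.tendsto_atTop).sub hL
  obtain ⟨k, hk⟩ := ((hwpL _ _ (ha.comp_tendsto_s6 hφ.tendsto_atTop) hy).eventually
    (gt_mem_nhds (half_pos hε))).exists
  have h₁ : f (a (φ k) * b k) < ε / 2 := hsmall k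
  simp only [Function.comp_apply, mul_sub, map_sub] at hk
  linarith [hab (φ k)]

end BanachAlgebra

theorem exists_l1_sequence_of_wpL_not_cc_general {A : Type*} [NormedRing A] [NormedAlgebra ℝ A]
    (f : A →L[ℝ] ℝ)
    (hwpL : ∀ x y : ℕ → A, WeaklyNull x → WeaklyNull y →
      Tendsto (fun n => f (x n * y n)) atTop (𝓝 0))
    (hncc : ¬ CompletelyContinuous (Tf f)) :
    ∃ w u : ℕ → A, IsL1Sequence w ∧ WeaklyNull u ∧
      ∀ m n : ℕ, n ≤ m → f (u m * w n) = if m = n then 1 else 0 := by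
  obtain ⟨ε, hε, a, b, ha, hb, hab⟩ := exists_weaklyNull_of_not_completelyContinuous f hncc
  obtain ⟨φ, hφ, hwc | hl1⟩ := exists_strictMono_weaklyCauchy_or_isL1Sequence hb
  · exact absurd hwc <| not_weaklyCauchy_of_le_apply_mul f hwpL hε
      (ha.comp_tendsto_s6 hφ.tendsto_atTop) fun n => hab (φ n)
  obtain ⟨t, ht, u, hu, hbio⟩ := exists_strictMono_weaklyNull_biorthogonal
    (ψ := fun n => Sf f (b (φ n)))
    (fun n => (norm_Sf_le f _).trans (mul_le_of_le_one_right (norm_nonneg f) (hb _)))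
    (ha.comp_tendsto_s6 hφ.tendsto_atTop) hε fun n => hab (φ n)
  exact ⟨b ∘ φ ∘ t, u, hl1.comp_injective ht.injective, hu, hbio⟩

theorem exists_l1_sequence_of_wpL_not_cc {A : Type*} [NormedRing A] [NormedAlgebra ℝ A]
    [CompleteSpace A] (f : A →L[ℝ] ℝ)
    (hwpL : ∀ x y : ℕ → A, WeaklyNull x → WeaklyNull y →
      Tendsto (fun n => f (x n * y n)) atTop (𝓝 0))
    (hncc : ¬ CompletelyContinuous (Tf f)) :
    ∃ w u : ℕ → A, IsL1Sequence w ∧ WeaklyNull u ∧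
      ∀ m n : ℕ, n ≤ m → f (u m * w n) = if m = n then 1 else 0 :=
  exists_l1_sequence_of_wpL_not_cc_general f hwpL hncc
end

section
/- Let A be a Banach algebra, f ∈ A*, and suppose (w_n) is an ℓ¹ sequence in A, (u_n) is a sequence in A such that the series Σ u_n is weakly unconditionally convergent, and f(u_m w_n) = δ_{mn} for all m, n. Then the closed linear span of (w_n) is a complemented subspace of A isomorphic to ℓ¹. -/
open Filter Topology ENNReal

instance : Fact ((1 : ℝ≥0∞) ≤ 1) := ⟨le_refl 1⟩

/-!
The ℓ¹ estimates make `x ↦ ∑ xₙ wₙ` an isomorphism `T` of `ℓ¹` onto the closed span of `(wₙ)`.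
Weak unconditional convergence of `∑ uₙ`, tested on the functionals `x ↦ f (x * y)`, puts
`(f (uₙ * y))ₙ` in `ℓ¹`, and the closed graph theorem makes `V : y ↦ (f (uₙ * y))ₙ` a bounded map
`A → ℓ¹`. Biorthogonality says `V wₘ = eₘ`, so `T ∘ V` is a bounded projection onto the closed span.
-/

open scoped lp

namespace lp

section OneNorm

variable {ι : Type*} {E : ι → Type*} [∀ i, NormedAddCommGroup (E i)]

theorem norm_eq_tsum_norm_of_one (x : lp E 1) : ‖x‖ = ∑' i, ‖x i‖ := by
  rw [norm_eq_tsum_rpow (by norm_num)]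
  simp

theorem summable_norm_of_one (x : lp E 1) : Summable fun i => ‖x i‖ := by
  simpa using (lp.memℓp x).summable (by norm_num)

end OneNorm

section Synthesis

variable {ι 𝕜 E : Type*} [NormedField 𝕜] [NormedAddCommGroup E] [NormedSpace 𝕜 E]
  {w : ι → E} {C : ℝ}

theorem norm_smul_le_mul_of_norm_le (hw : ∀ i, ‖w i‖ ≤ C) (x : ℓ¹(ι, 𝕜)) (i : ι) :
    ‖x i • w i‖ ≤ ‖x i‖ * C :=
  (norm_smul_le _ _).trans (mul_le_mul_of_nonneg_left (hw i) (norm_nonneg _))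

theorem summable_norm_smul_of_norm_le (hw : ∀ i, ‖w i‖ ≤ C) (x : ℓ¹(ι, 𝕜)) :
    Summable fun i => ‖x i • w i‖ :=
  .of_nonneg_of_le (fun _ => norm_nonneg _) (norm_smul_le_mul_of_norm_le hw x)
    ((summable_norm_of_one x).mul_right C)

theorem norm_tsum_smul_le (hw : ∀ i, ‖w i‖ ≤ C) (x : ℓ¹(ι, 𝕜)) :
    ‖∑' i, x i • w i‖ ≤ C * ‖x‖ :=
  calc ‖∑' i, x i • w i‖ ≤ ∑' i, ‖x i • w i‖ :=
        norm_tsum_le_tsum_norm (summable_norm_smul_of_norm_le hw x)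
    _ ≤ ∑' i, ‖x i‖ * C :=
        (summable_norm_smul_of_norm_le hw x).tsum_le_tsum (norm_smul_le_mul_of_norm_le hw x)
          ((summable_norm_of_one x).mul_right C)
    _ = C * ‖x‖ := by rw [tsum_mul_right, norm_eq_tsum_norm_of_one, mul_comm]

variable [CompleteSpace E]

variable (𝕜) in
noncomputable def tsumSMulCLM (w : ι → E) (C : ℝ) (hw : ∀ i, ‖w i‖ ≤ C) : ℓ¹(ι, 𝕜) →L[𝕜] E :=
  LinearMap.mkContinuous
    { toFun x := ∑' i, x i • w i
      map_add' x y := by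
        simp only [coeFn_add, Pi.add_apply, add_smul]
        exact (summable_norm_smul_of_norm_le hw x).of_norm.tsum_add
          (summable_norm_smul_of_norm_le hw y).of_norm
      map_smul' a x := by
        simp only [coeFn_smul, Pi.smul_apply, smul_eq_mul, mul_smul, RingHom.id_apply]
        exact (summable_norm_smul_of_norm_le hw x).of_norm.tsum_const_smul a }
    C (norm_tsum_smul_le hw)

theorem hasSum_tsumSMulCLM (hw : ∀ i, ‖w i‖ ≤ C) (x : ℓ¹(ι, 𝕜)) :
    HasSum (fun i => x i • w i) (tsumSMulCLM 𝕜 w C hw x) :=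
  (summable_norm_smul_of_norm_le hw x).of_norm.hasSum

theorem tsumSMulCLM_single [DecidableEq ι] (hw : ∀ i, ‖w i‖ ≤ C) (i : ι) :
    tsumSMulCLM 𝕜 w C hw (lp.single 1 i 1) = w i := by
  refine ((hasSum_tsumSMulCLM hw _).unique (hasSum_single i fun j hj => ?_)).trans ?_
  · rw [lp.single_apply_ne 1 i _ hj, zero_smul]
  · rw [lp.single_apply_self, one_smul]

theorem range_tsumSMulCLM_le (hw : ∀ i, ‖w i‖ ≤ C) :
    (tsumSMulCLM 𝕜 w C hw).range ≤ (Submodule.span 𝕜 (Set.range w)).topologicalClosure := by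
  rintro _ ⟨x, rfl⟩
  refine (Submodule.span 𝕜 (Set.range w)).isClosed_topologicalClosure.mem_of_tendsto
    (hasSum_tsumSMulCLM hw x) (.of_forall fun s => Submodule.sum_mem _ fun i _ => ?_)
  exact Submodule.smul_mem _ _ (Submodule.le_topologicalClosure _ (Submodule.subset_span ⟨i, rfl⟩))

theorem range_tsumSMulCLM (hw : ∀ i, ‖w i‖ ≤ C)
    (h : IsClosed (Set.range (tsumSMulCLM 𝕜 w C hw))) :
    (tsumSMulCLM 𝕜 w C hw).range = (Submodule.span 𝕜 (Set.range w)).topologicalClosure := by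
  classical
  refine le_antisymm (range_tsumSMulCLM_le hw) (Submodule.topologicalClosure_minimal _ ?_ h)
  rw [Submodule.span_le]
  rintro _ ⟨i, rfl⟩
  exact ⟨lp.single 1 i 1, tsumSMulCLM_single hw i⟩

theorem mul_norm_le_norm_tsumSMulCLM (hw : ∀ i, ‖w i‖ ≤ C) {c : ℝ}
    (hc : ∀ (s : Finset ι) (a : ι → 𝕜), c * ∑ i ∈ s, ‖a i‖ ≤ ‖∑ i ∈ s, a i • w i‖)
    (x : ℓ¹(ι, 𝕜)) : c * ‖x‖ ≤ ‖tsumSMulCLM 𝕜 w C hw x‖ := by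
  rw [norm_eq_tsum_norm_of_one]
  exact le_of_tendsto_of_tendsto' ((summable_norm_of_one x).hasSum.mul_left c)
    (hasSum_tsumSMulCLM hw x).norm fun s => by simpa only [Finset.mul_sum] using hc s x

theorem antilipschitzWith_tsumSMulCLM (hw : ∀ i, ‖w i‖ ≤ C) {c : ℝ} (hc0 : 0 < c)
    (hc : ∀ (s : Finset ι) (a : ι → 𝕜), c * ∑ i ∈ s, ‖a i‖ ≤ ‖∑ i ∈ s, a i • w i‖) :
    AntilipschitzWith (Real.toNNReal c⁻¹) (tsumSMulCLM 𝕜 w C hw) :=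
  (tsumSMulCLM 𝕜 w C hw).antilipschitz_of_bound fun x => by
    rw [Real.coe_toNNReal _ (inv_nonneg.2 hc0.le), inv_mul_eq_div, le_div_iff₀ hc0, mul_comm]
    exact mul_norm_le_norm_tsumSMulCLM hw hc x

end Synthesis

end lp

namespace ContinuousLinearMap

variable {ι 𝕜 E : Type*} {F : ι → Type*} [NontriviallyNormedField 𝕜] [NormedAddCommGroup E]
  [NormedSpace 𝕜 E] [CompleteSpace E] [∀ i, NormedAddCommGroup (F i)] [∀ i, NormedSpace 𝕜 (F i)]
  [∀ i, CompleteSpace (F i)] {p : ℝ≥0∞} [Fact (1 ≤ p)]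

/-- Continuity is automatic by the closed graph theorem, since every coordinate is continuous. -/
noncomputable def lpPi (φ : ∀ i, E →L[𝕜] F i) (hφ : ∀ y, Memℓp (fun i => φ i y) p) :
    E →L[𝕜] lp F p :=
  ofSeqClosedGraph (g :=
    { toFun y := ⟨fun i => φ i y, hφ y⟩
      map_add' y z := Subtype.ext <| funext fun i => map_add (φ i) y z
      map_smul' a y := Subtype.ext <| funext fun i => map_smul (φ i) a y })
    fun _ x y hv hy => Subtype.ext <| funext fun i =>
      tendsto_nhds_unique
        (((continuous_apply i).comp lp.uniformContinuous_coe.continuous).tendsto y |>.comp hy)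
        (((φ i).continuous.tendsto x).comp hv)

end ContinuousLinearMap

theorem IsL1Sequence.exists_bounds {A : Type*} [NormedAddCommGroup A] [NormedSpace ℝ A]
    {w : ℕ → A} (hw : IsL1Sequence w) :
    ∃ c C : ℝ, 0 < c ∧ (∀ n, ‖w n‖ ≤ C) ∧
      ∀ (s : Finset ℕ) (a : ℕ → ℝ), c * ∑ n ∈ s, ‖a n‖ ≤ ‖∑ n ∈ s, a n • w n‖ := by
  obtain ⟨c, C, hc, hb⟩ := hw
  refine ⟨c, C, hc, fun n => by simpa using (hb {n} fun _ => 1).2, fun s a => ?_⟩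
  simpa only [Real.norm_eq_abs] using (hb s a).1

theorem complemented_l1_of_wuc {A : Type*} [NormedRing A] [NormedAlgebra ℝ A] [CompleteSpace A]
    (f : A →L[ℝ] ℝ) (w u : ℕ → A) (hw : IsL1Sequence w)
    (hu : ∀ g : A →L[ℝ] ℝ, Summable fun n => |g (u n)|)
    (hδ : ∀ m n : ℕ, f (u m * w n) = if m = n then 1 else 0) :
    ∃ P : A →L[ℝ] A,
      (∀ y : A, P y ∈ (Submodule.span ℝ (Set.range w)).topologicalClosure) ∧
      (∀ y ∈ (Submodule.span ℝ (Set.range w)).topologicalClosure, P y = y) ∧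
      Nonempty
        (((Submodule.span ℝ (Set.range w)).topologicalClosure ≃L[ℝ]
          lp (fun _ : ℕ => ℝ) 1)) := by
  obtain ⟨c, C, hc, hwC, hlower⟩ := hw.exists_bounds
  set T := lp.tsumSMulCLM ℝ w C hwC
  have hT := lp.antilipschitzWith_tsumSMulCLM hwC hc hlower
  have hclosed := hT.isClosed_range T.uniformContinuous
  have hrange := lp.range_tsumSMulCLM hwC hclosed
  -- the coordinates `y ↦ f (u n * y) = Sf f y (u n)` are summable by weak unconditional convergence
  set V : A →L[ℝ] ℓ¹(ℕ, ℝ) := ContinuousLinearMap.lpPi (fun n => Tf f (u n))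
    fun y => memℓp_gen (by simpa [Tf, Sf] using hu (Sf f y))
  have hVw : ∀ m, V (w m) = lp.single 1 m 1 := fun m => Subtype.ext <| funext fun n => by
    rw [lp.single_apply, Pi.single_apply, ← hδ]
    rfl
  refine ⟨T.comp V, fun y => hrange ▸ T.mem_range_self (V y), fun y hy => ?_,
    ⟨((T.equivRange hT.injective hclosed).trans (.ofEq _ _ hrange)).symm⟩⟩
  refine ContinuousLinearMap.eqOn_closure_span (f := T.comp V) (g := .id ℝ A) ?_
    (by rwa [← Submodule.topologicalClosure_coe])
  rintro _ ⟨m, rfl⟩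
  change T (V (w m)) = w m
  rw [hVw, lp.tsumSMulCLM_single]
end

section
/- Let A be a Banach algebra, f ∈ A*, a ∈ A. Suppose T_f maps weakly precompact subsets of A onto L-sets, and the left multiplication operator L_a : x ↦ ax is weakly precompact (maps bounded sets to weakly precompact sets). Then S_{fa} is completely continuous, where fa ∈ A* is given by (fa)(x) = f(ax) and S_g(b)(x) = g(xb). -/
open Filter Topology ENNReal

theorem sf_fa_completelyContinuous {A : Type*} [NormedRing A] [NormedAlgebra ℝ A]
    [CompleteSpace A] (f : A →L[ℝ] ℝ) (a : A)
    (hf : ∀ K : Set A, WeaklyPrecompact K → LSet (Tf f '' K))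
    (hLa : ∀ B : Set A, Bornology.IsBounded B → WeaklyPrecompact ((fun x => a * x) '' B)) :
    CompletelyContinuous (Sf (Tf f a)) := by
  intro b hb
  rw [Metric.tendsto_atTop]
  intro ε hε
  have hK : WeaklyPrecompact ((fun x => a * x) '' Metric.closedBall (0 : A) 1) :=
    hLa _ Metric.isBounded_closedBall
  obtain ⟨N, hN⟩ := hf _ hK b hb (ε / 2) (by linarith)
  refine ⟨N, fun n hn => ?_⟩
  have hbound : ‖Sf (Tf f a) (b n)‖ ≤ ε / 2 := by
    refine ContinuousLinearMap.opNorm_le_bound _ (by linarith) fun x => ?_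
    rcases eq_or_ne x 0 with rfl | hx
    · simp [Sf, Tf]
    · have hxpos : (0 : ℝ) < ‖x‖ := norm_pos_iff.mpr hx
      set y := ‖x‖⁻¹ • x with hy
      have hyball : y ∈ Metric.closedBall (0 : A) 1 := by
        simp only [Metric.mem_closedBall, dist_zero_right, hy, norm_smul, norm_inv,
          norm_norm]
        rw [inv_mul_le_iff₀ hxpos]
        simp
      have hmem : Tf f (a * y) ∈ Tf f '' ((fun x => a * x) '' Metric.closedBall (0 : A) 1) :=
        ⟨a * y, ⟨y, hyball, rfl⟩, rfl⟩
      have h1 : |Tf f (a * y) (b n)| < ε / 2 := hN n hn _ hmem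
      have h2 : Sf (Tf f a) (b n) x = ‖x‖ * Tf f (a * y) (b n) := by
        simp only [Sf, Tf, ContinuousLinearMap.coe_comp', Function.comp_apply,
          ContinuousLinearMap.mul_apply', ContinuousLinearMap.flip_apply]
        have key : a * y * b n = ‖x‖⁻¹ • (a * (x * b n)) := by
          rw [hy, mul_smul_comm, smul_mul_assoc, mul_assoc]
        rw [key, map_smul, smul_eq_mul]
        field_simp
      rw [Real.norm_eq_abs, h2, abs_mul, abs_norm]
      calc ‖x‖ * |Tf f (a * y) (b n)| ≤ ‖x‖ * (ε / 2) := by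
            exact mul_le_mul_of_nonneg_left h1.le hxpos.le
        _ = ε / 2 * ‖x‖ := mul_comm _ _
  rw [Real.dist_eq, sub_zero, abs_of_nonneg (norm_nonneg _)]
  linarith
end

section
/- Let A be a Banach algebra, f ∈ A*, a ∈ A. If T_f is completely continuous and L_a : x ↦ ax is weakly precompact, then T_{fa} is a compact operator (i.e., fa is an almost periodic functional). -/
/-!
Write `T_{fa} = T_f ∘ L_a`, so that `T_{fa}` maps the unit ball onto the `T_f`-image of the weakly
precompact set `L_a(ball)`. A completely continuous additive map sends weakly Cauchy sequences to
norm Cauchy ones, since the differences along any two subsequences are weakly null. Hence every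
sequence in the image has a Cauchy subsequence, the image is totally bounded, and its closure in
the complete space `A*` is compact.
-/

open Filter Topology ENNReal

open Set

theorem totallyBounded_of_forall_exists_cauchySeq_subseq {X : Type*} [UniformSpace X]
    {s : Set X} (h : ∀ u : ℕ → X, (∀ n, u n ∈ s) → ∃ φ : ℕ → ℕ, StrictMono φ ∧ CauchySeq (u ∘ φ)) :
    TotallyBounded s := by
  intro V hV
  by_contra! hcover
  -- no finite `V`-net: pick points greedily outside the `V`-balls around the earlier ones
  obtain ⟨u, hu_mem, hu_sep⟩ :
      ∃ u : ℕ → X, (∀ n, u n ∈ s) ∧ ∀ n m, m < n → u m ∉ UniformSpace.ball (u n) V := by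
    simp only [not_subset, mem_iUnion₂, not_exists, exists_prop] at hcover
    simpa only [forall_and, forall_mem_image, not_and] using! seq_of_forall_finite_exists hcover
  obtain ⟨φ, hφ, hcauchy⟩ := h u hu_mem
  obtain ⟨N, hN⟩ := hcauchy.mem_entourage hV
  exact hu_sep (φ (N + 1)) (φ N) (hφ N.lt_succ_self) (hN (N + 1) N N.le_succ le_rfl)

section CompletelyContinuous

variable {E F 𝓕 : Type*} [NormedAddCommGroup E] [NormedSpace ℝ E] [NormedAddCommGroup F]

theorem WeaklyCauchy.weaklyNull_sub_comp {x : ℕ → E} (hx : WeaklyCauchy x) {m n : ℕ → ℕ}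
    (hm : Tendsto m atTop atTop) (hn : Tendsto n atTop atTop) :
    WeaklyNull fun i => x (m i) - x (n i) := by
  intro g
  obtain ⟨L, hL⟩ := hx g
  simpa using (hL.comp hm).sub (hL.comp hn)

variable [FunLike 𝓕 E F] [AddMonoidHomClass 𝓕 E F] {T : 𝓕}

theorem CompletelyContinuous.cauchySeq_map_of_weaklyCauchy (hT : CompletelyContinuous T)
    {x : ℕ → E} (hx : WeaklyCauchy x) : CauchySeq fun n => T (x n) := by
  rw [Metric.cauchySeq_iff]
  by_contra! h
  obtain ⟨ε, hε, h⟩ := h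
  choose m hm n hn hdist using h
  have hnull := hT _ <|
    hx.weaklyNull_sub_comp (tendsto_atTop_mono hm tendsto_id) (tendsto_atTop_mono hn tendsto_id)
  obtain ⟨i, hi⟩ := (hnull.eventually (gt_mem_nhds hε)).exists
  rw [map_sub, ← dist_eq_norm] at hi
  exact (hdist i).not_gt hi

theorem WeaklyPrecompact.totallyBounded_image {K : Set E} (hK : WeaklyPrecompact K)
    (hT : CompletelyContinuous T) : TotallyBounded (T '' K) := by
  refine totallyBounded_of_forall_exists_cauchySeq_subseq fun y hy => ?_
  choose x hxK hxy using hy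
  obtain rfl : (fun n => T (x n)) = y := funext hxy
  obtain ⟨φ, hφ, hcauchy⟩ := hK x hxK
  exact ⟨φ, hφ, hT.cauchySeq_map_of_weaklyCauchy hcauchy⟩

end CompletelyContinuous

theorem Tf_eq_compL_comp_mul {A : Type*} [NormedRing A] [NormedAlgebra ℝ A] (f : A →L[ℝ] ℝ) :
    Tf f = ⇑(ContinuousLinearMap.compL ℝ A A ℝ f ∘L ContinuousLinearMap.mul ℝ A) :=
  rfl

theorem tf_fa_compact_general {A : Type*} [NormedRing A] [NormedAlgebra ℝ A]
    (f : A →L[ℝ] ℝ) (a : A)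
    (hf : CompletelyContinuous (Tf f))
    (hLa : ∀ x : ℕ → A, (∃ C : ℝ, ∀ n, ‖x n‖ ≤ C) →
      ∃ φ : ℕ → ℕ, StrictMono φ ∧ WeaklyCauchy (fun k => a * x (φ k))) :
    IsCompactOperator (fun b => Tf f (a * b)) := by
  have hK : WeaklyPrecompact ((a * ·) '' Metric.closedBall (0 : A) 1) := by
    intro x hx
    choose b hb hbx using hx
    obtain rfl : (fun n => a * b n) = x := funext hbx
    exact hLa b ⟨1, by simpa using hb⟩
  rw [Tf_eq_compL_comp_mul] at hf
  refine (isCompactOperator_iff_exists_mem_nhds_isCompact_closure_image _).2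
    ⟨_, Metric.closedBall_mem_nhds 0 one_pos, ?_⟩
  rw [← image_image (Tf f) (a * ·), Tf_eq_compL_comp_mul]
  exact (hK.totallyBounded_image hf).closure.isCompact_of_isClosed isClosed_closure

theorem tf_fa_compact {A : Type*} [NormedRing A] [NormedAlgebra ℝ A] [CompleteSpace A]
    (f : A →L[ℝ] ℝ) (a : A)
    (hf : CompletelyContinuous (Tf f))
    (hLa : ∀ x : ℕ → A, (∃ C : ℝ, ∀ n, ‖x n‖ ≤ C) →
      ∃ φ : ℕ → ℕ, StrictMono φ ∧ WeaklyCauchy (fun k => a * x (φ k))) :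
    IsCompactOperator (fun b => Tf f (a * b)) :=
  tf_fa_compact_general f a hf hLa
end

section
/- Let A be a Banach algebra. Then every f ∈ A* satisfies: T_f maps weakly precompact sets onto L-sets, if and only if the multiplication of A is jointly weakly sequentially continuous (x_n y_n → 0 weakly whenever x_n → 0 and y_n → 0 weakly). -/
open Filter Topology ENNReal

/-!
The equivalence holds for every bounded bilinear form `B` in place of `(a, x) ↦ f (a * x)`.
A weakly null sequence has weakly precompact range, which gives one direction. Conversely,
L-sets are detected by sequences `B (a n) (z n)` with `z` weakly null, and after passing to a
subsequence `a` is weakly Cauchy. A diagonal choice `j` makes the cross terms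
`B (a (j i)) (z (j (i + 1)))` tend to `0`, and `B (a (j (i + 1))) (z (j (i + 1)))` is such a cross
term plus `B (a (j (i + 1)) - a (j i)) (z (j (i + 1)))`, the form on two weakly null sequences.
-/

namespace WeaklyNull

variable {E : Type*} [NormedAddCommGroup E] [NormedSpace ℝ E] {x : ℕ → E}

theorem comp (hx : WeaklyNull x) {k : ℕ → ℕ} (hk : Tendsto k atTop atTop) :
    WeaklyNull (x ∘ k) :=
  fun f => (hx f).comp hk

theorem weaklyCauchy_s11 (hx : WeaklyNull x) : WeaklyCauchy x :=
  fun f => ⟨0, hx f⟩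

theorem weaklyPrecompact_range (hx : WeaklyNull x) : WeaklyPrecompact (Set.range x) := by
  intro z hz
  choose k hk using hz
  by_cases hrep : ∃ m, ∃ᶠ n in atTop, k n = m
  · obtain ⟨m, hm⟩ := hrep
    obtain ⟨φ, hφ, hφm⟩ := extraction_of_frequently_atTop hm
    have hconst : z ∘ φ = fun _ => x m := funext fun n => by simp [← hk, hφm]
    exact ⟨φ, hφ, hconst ▸ fun f => ⟨f (x m), tendsto_const_nhds⟩⟩
  · have hk_fin : ∀ m, Finite (k ⁻¹' {m}) := fun m =>
      (Set.not_infinite.1 fun hinf => hrep ⟨m, Nat.frequently_atTop_iff_infinite.2 hinf⟩).to_subtype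
    have hk_top : Tendsto k atTop atTop :=
      Nat.cofinite_eq_atTop ▸ Tendsto.cofinite_of_finite_preimage_singleton hk_fin
    have hzk : z = x ∘ k := funext fun n => (hk n).symm
    exact ⟨id, strictMono_id, hzk ▸ (hx.comp hk_top).weaklyCauchy_s11⟩

end WeaklyNull

namespace WeaklyCauchy

variable {E : Type*} [NormedAddCommGroup E] [NormedSpace ℝ E] {b : ℕ → E}

theorem weaklyNull_sub_s11 (hb : WeaklyCauchy b) {k₁ k₂ : ℕ → ℕ} (h₁ : Tendsto k₁ atTop atTop)
    (h₂ : Tendsto k₂ atTop atTop) : WeaklyNull fun n => b (k₁ n) - b (k₂ n) := fun f => by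
  obtain ⟨L, hL⟩ := hb f
  simpa only [map_sub, sub_self, Function.comp_def] using (hL.comp h₁).sub (hL.comp h₂)

end WeaklyCauchy

theorem lSet_iff_tendsto {E : Type*} [NormedAddCommGroup E] [NormedSpace ℝ E]
    {S : Set (E →L[ℝ] ℝ)} :
    LSet S ↔ ∀ x : ℕ → E, WeaklyNull x → ∀ g : ℕ → E →L[ℝ] ℝ, (∀ n, g n ∈ S) →
      Tendsto (fun n => g n (x n)) atTop (𝓝 0) := by
  refine ⟨fun hS x hx g hg => Metric.tendsto_atTop.2 fun ε hε => ?_, fun h x hx ε hε => ?_⟩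
  · obtain ⟨N, hN⟩ := hS x hx ε hε
    exact ⟨N, fun n hn => by simpa [Real.dist_eq] using hN n hn (g n) (hg n)⟩
  · by_contra! hbad
    obtain ⟨ψ, hψ, hψbad⟩ := extraction_of_frequently_atTop (frequently_atTop.2 hbad)
    choose g hgS hg using hψbad
    have hlim := (h _ (hx.comp hψ.tendsto_atTop) g hgS).abs
    rw [abs_zero] at hlim
    obtain ⟨i, hi⟩ := (hlim.eventually_lt_const hε).exists
    exact (hg i).not_gt hi

theorem exists_strictMono_tendsto_apply_apply_succ {c : ℕ → ℕ → ℝ}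
    (hc : ∀ i, Tendsto (c i) atTop (𝓝 0)) :
    ∃ j : ℕ → ℕ, StrictMono j ∧ Tendsto (fun i => c (j i) (j (i + 1))) atTop (𝓝 0) := by
  obtain ⟨j, -, hj⟩ := exists_seq_of_forall_finset_exists (fun _ => True)
    (fun i m => i < m ∧ |c i m| < 1 / ((i : ℝ) + 1)) fun s _ => by
      have hev : ∀ i ∈ s, ∀ᶠ m in atTop, i < m ∧ |c i m| < 1 / ((i : ℝ) + 1) := fun i _ =>
        (eventually_gt_atTop i).and
          (((hc i).abs.eventually_lt_const (by rw [abs_zero]; positivity)))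
      obtain ⟨m, hm⟩ := ((eventually_all_finset s).2 hev).exists
      exact ⟨m, trivial, hm⟩
  have hjmono : StrictMono j := fun m n hmn => (hj m n hmn).1
  refine ⟨j, hjmono, squeeze_zero_norm (fun i => ?_) tendsto_one_div_add_atTop_nhds_zero_nat⟩
  calc ‖c (j i) (j (i + 1))‖ ≤ 1 / ((j i : ℝ) + 1) := ((hj i (i + 1) i.lt_succ_self).2).le
    _ ≤ 1 / ((i : ℝ) + 1) := by gcongr; exact_mod_cast hjmono.id_le i

section BilinearForm

variable {E F : Type*} [NormedAddCommGroup E] [NormedSpace ℝ E] [NormedAddCommGroup F]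
  [NormedSpace ℝ F] (B : E →L[ℝ] F →L[ℝ] ℝ)

theorem exists_strictMono_tendsto_of_weaklyCauchy
    (hB : ∀ x y, WeaklyNull x → WeaklyNull y → Tendsto (fun n => B (x n) (y n)) atTop (𝓝 0))
    {b : ℕ → E} {z : ℕ → F} (hb : WeaklyCauchy b) (hz : WeaklyNull z) :
    ∃ k : ℕ → ℕ, StrictMono k ∧ Tendsto (fun n => B (b (k n)) (z (k n))) atTop (𝓝 0) := by
  obtain ⟨j, hj, hcross⟩ := exists_strictMono_tendsto_apply_apply_succ fun i => hz (B (b i))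
  have hj' : StrictMono fun i => j (i + 1) := hj.comp (strictMono_id.add_const 1)
  have hdiff := hb.weaklyNull_sub_s11 hj'.tendsto_atTop hj.tendsto_atTop
  refine ⟨fun i => j (i + 1), hj', ?_⟩
  simpa using (hB _ _ hdiff (hz.comp hj'.tendsto_atTop)).add hcross

theorem lSet_image_iff :
    (∀ K : Set E, WeaklyPrecompact K → LSet (B '' K)) ↔
      ∀ x y, WeaklyNull x → WeaklyNull y → Tendsto (fun n => B (x n) (y n)) atTop (𝓝 0) := by
  refine ⟨fun hL x y hx hy => ?_, fun hB K hK => lSet_iff_tendsto.2 fun z hz g hg => ?_⟩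
  · exact lSet_iff_tendsto.1 (hL _ hx.weaklyPrecompact_range) y hy (fun n => B (x n))
      fun n => ⟨x n, ⟨n, rfl⟩, rfl⟩
  · choose a haK hag using hg
    obtain rfl : g = fun n => B (a n) := funext fun n => (hag n).symm
    refine tendsto_of_subseq_tendsto fun ns hns => ?_
    obtain ⟨φ, hφ, hcauchy⟩ := hK (a ∘ ns) fun n => haK (ns n)
    obtain ⟨k, -, hk⟩ :=
      exists_strictMono_tendsto_of_weaklyCauchy B hB hcauchy (hz.comp (hns.comp hφ.tendsto_atTop))
    exact ⟨φ ∘ k, hk⟩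

end BilinearForm

theorem wpL_all_iff_jwsc_general {A : Type*} [NormedRing A] [NormedAlgebra ℝ A] :
    (∀ f : A →L[ℝ] ℝ, ∀ K : Set A, WeaklyPrecompact K → LSet (Tf f '' K)) ↔
      (∀ x y : ℕ → A, WeaklyNull x → WeaklyNull y → WeaklyNull (fun n => x n * y n)) := by
  have hTf (f : A →L[ℝ] ℝ) : Tf f = ⇑(ContinuousLinearMap.compL ℝ A A ℝ f ∘L
      ContinuousLinearMap.mul ℝ A) := rfl
  simp only [hTf, lSet_image_iff]
  exact ⟨fun h x y hx hy f => h f x y hx hy, fun h f x y hx hy => h x y hx hy f⟩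

theorem wpL_all_iff_jwsc {A : Type*} [NormedRing A] [NormedAlgebra ℝ A] [CompleteSpace A] :
    (∀ f : A →L[ℝ] ℝ, ∀ K : Set A, WeaklyPrecompact K → LSet (Tf f '' K)) ↔
      (∀ x y : ℕ → A, WeaklyNull x → WeaklyNull y → WeaklyNull (fun n => x n * y n)) :=
  wpL_all_iff_jwsc_general
end

section
/- Let A be a Banach algebra. Then T_f is completely continuous for every f ∈ A* if and only if the multiplication of A is l-strong jointly weakly sequentially continuous, i.e., (x_n y_n) is weakly null whenever (x_n) is weakly null and (y_n) is bounded. -/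
open Filter Topology ENNReal

theorem cc_all_iff_lstrong_jwsc {A : Type*} [NormedRing A] [NormedAlgebra ℝ A]
    [CompleteSpace A] :
    (∀ f : A →L[ℝ] ℝ, CompletelyContinuous (Tf f)) ↔
      (∀ x y : ℕ → A, WeaklyNull x → (∃ C : ℝ, ∀ n, ‖y n‖ ≤ C) →
        WeaklyNull (fun n => x n * y n)) := by
  constructor
  · intro hcc x y hx ⟨C, hC⟩ f
    have hT := hcc f x hx
    have hb : ∀ n, |f (x n * y n)| ≤ ‖Tf f (x n)‖ * C := by
      intro n
      have h1 : f (x n * y n) = Tf f (x n) (y n) := by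
        simp [Tf, ContinuousLinearMap.mul_apply']
      rw [h1]
      calc |Tf f (x n) (y n)| = ‖Tf f (x n) (y n)‖ := rfl
        _ ≤ ‖Tf f (x n)‖ * ‖y n‖ := (Tf f (x n)).le_opNorm _
        _ ≤ ‖Tf f (x n)‖ * C := by
            exact mul_le_mul_of_nonneg_left (hC n) (norm_nonneg _)
    have hlim : Tendsto (fun n => ‖Tf f (x n)‖ * C) atTop (𝓝 0) := by
      simpa using hT.mul_const C
    have := squeeze_zero (fun n => abs_nonneg _) hb hlim
    exact tendsto_zero_iff_abs_tendsto_zero _ |>.mpr this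
  · intro hmul f x hx
    by_contra hcon
    rw [Metric.tendsto_atTop] at hcon
    push_neg at hcon
    obtain ⟨ε, hε, hfreq⟩ := hcon
    have hfq : ∃ᶠ n in atTop, ε ≤ ‖Tf f (x n)‖ := by
      rw [frequently_atTop]
      intro N
      obtain ⟨n, hn, hd⟩ := hfreq N
      refine ⟨n, hn, ?_⟩
      have : dist ‖Tf f (x n)‖ 0 = ‖Tf f (x n)‖ := by
        simp [Real.dist_eq, abs_of_nonneg (norm_nonneg _)]
      linarith [this ▸ hd]
    obtain ⟨φ, hφ, hφP⟩ := Filter.extraction_of_frequently_atTop hfq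
    have hy : ∀ k, ∃ y : A, ‖y‖ ≤ 1 ∧ ε / 2 < ‖Tf f (x (φ k)) y‖ := by
      intro k
      have h2 : ε / 2 < ‖Tf f (x (φ k))‖ := lt_of_lt_of_le (by linarith) (hφP k)
      obtain ⟨y, hy1, hy2⟩ := (Tf f (x (φ k))).exists_lt_apply_of_lt_opNorm h2
      exact ⟨y, hy1.le, hy2⟩
    choose y hy1 hy2 using hy
    have hxφ : WeaklyNull (fun n => x (φ n)) := fun g =>
      (hx g).comp hφ.tendsto_atTop
    have := hmul (fun n => x (φ n)) y hxφ ⟨1, hy1⟩ f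
    rw [tendsto_zero_iff_abs_tendsto_zero] at this
    have hev : ∀ᶠ n in atTop, |f (x (φ n) * y n)| < ε / 2 := by
      have := this.eventually (gt_mem_nhds (by linarith : (0:ℝ) < ε / 2))
      exact this
    obtain ⟨n, hn⟩ := hev.exists
    have heq : f (x (φ n) * y n) = Tf f (x (φ n)) (y n) := by
      simp [Tf, ContinuousLinearMap.mul_apply']
    rw [heq] at hn
    exact absurd hn (not_lt.mpr (hy2 n).le)
end

section
/- If a Banach algebra A has the Dunford–Pettis property, then the multiplication of A is jointly weakly sequentially continuous: x_n y_n → 0 weakly whenever x_n → 0 weakly and y_n → 0 weakly in A. -/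
open Filter Topology ENNReal

theorem WeaklyNull.map {E F : Type*} [NormedAddCommGroup E] [NormedSpace ℝ E]
    [NormedAddCommGroup F] [NormedSpace ℝ F] {x : ℕ → E} (hx : WeaklyNull x) (T : E →L[ℝ] F) :
    WeaklyNull (fun n => T (x n)) :=
  fun μ => hx (μ.comp T)

section Tf

variable {A : Type*} [NormedRing A] [NormedAlgebra ℝ A]

theorem Tf_apply (f : A →L[ℝ] ℝ) (a b : A) : Tf f a b = f (a * b) := rfl

/-- `Tf f` as a bounded linear map `A → A*`. -/
noncomputable def TfL (f : A →L[ℝ] ℝ) : A →L[ℝ] A →L[ℝ] ℝ :=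
  (ContinuousLinearMap.compL ℝ A A ℝ f).comp (ContinuousLinearMap.mul ℝ A)

theorem WeaklyNull.Tf {x : ℕ → A} (hx : WeaklyNull x) (f : A →L[ℝ] ℝ) :
    WeaklyNull (fun n => Tf f (x n)) :=
  hx.map (TfL f)

end Tf

theorem jwsc_of_DPP_general {A : Type*} [NormedRing A] [NormedAlgebra ℝ A]
    (hDPP : ∀ (x : ℕ → A) (F : ℕ → (A →L[ℝ] ℝ)), WeaklyNull x →
      (∀ μ : (A →L[ℝ] ℝ) →L[ℝ] ℝ, Tendsto (fun n => μ (F n)) atTop (𝓝 0)) →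
      Tendsto (fun n => F n (x n)) atTop (𝓝 0)) :
    ∀ x y : ℕ → A, WeaklyNull x → WeaklyNull y → WeaklyNull (fun n => x n * y n) := by
  intro x y hx hy f
  simpa only [Tf_apply] using hDPP y (fun n => Tf f (x n)) hy (hx.Tf f)

theorem jwsc_of_DPP {A : Type*} [NormedRing A] [NormedAlgebra ℝ A] [CompleteSpace A]
    (hDPP : ∀ (x : ℕ → A) (F : ℕ → (A →L[ℝ] ℝ)), WeaklyNull x →
      (∀ μ : (A →L[ℝ] ℝ) →L[ℝ] ℝ, Tendsto (fun n => μ (F n)) atTop (𝓝 0)) →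
      Tendsto (fun n => F n (x n)) atTop (𝓝 0)) :
    ∀ x y : ℕ → A, WeaklyNull x → WeaklyNull y → WeaklyNull (fun n => x n * y n) :=
  jwsc_of_DPP_general hDPP
end

section
/- The Banach algebra ℓ^p (1 < p < ∞) with pointwise multiplication has jointly weakly sequentially continuous multiplication: if (x_n) and (y_n) are weakly null sequences in ℓ^p, then (x_n · y_n) (pointwise product) is weakly null in ℓ^p. -/
open Filter Topology ENNReal

/-! A weakly null sequence is bounded (uniform boundedness) and coordinatewise null, and both
properties pass to pointwise products since `‖x y‖_p ≤ ‖x‖_p ‖y‖_∞ ≤ ‖x‖_p ‖y‖_p`. Conversely, for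
`1 < p < ∞` a bounded coordinatewise null sequence in `ℓᵖ` is weakly null: a functional `f` is
represented by its coefficients `f eᵢ`, which form a vector of `ℓ^q` for the conjugate exponent `q`.
Truncating that vector to a finite set leaves a tail that is small in `ℓ^q`, hence by Hölder small
uniformly on bounded sets, while the finite part tends to zero coordinatewise. -/

theorem WeaklyNull.exists_norm_le {A : Type*} [NormedAddCommGroup A] [NormedSpace ℝ A]
    {x : ℕ → A} (hx : WeaklyNull x) : ∃ C, ∀ n, ‖x n‖ ≤ C := by
  obtain ⟨C, hC⟩ := banach_steinhaus (g := fun n => NormedSpace.inclusionInDoubleDual ℝ A (x n))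
    fun f => by simpa [bddAbove_def, NormedSpace.dual_def] using (hx f).norm.bddAbove_range
  exact ⟨C, fun n => (NormedSpace.inclusionInDoubleDualLi ℝ).norm_map (x n) ▸ hC n⟩

theorem WeaklyNull.tendsto_apply {ι : Type*} {p : ℝ≥0∞} [Fact (1 ≤ p)]
    {x : ℕ → lp (fun _ : ι => ℝ) p} (hx : WeaklyNull x) (i : ι) :
    Tendsto (fun n => x n i) atTop (𝓝 0) :=
  hx (lp.evalCLM ℝ _ p i)

theorem Real.le_rpow_of_le_mul_rpow_inv {p q S K : ℝ} (hpq : p.HolderConjugate q) (hS : 0 ≤ S)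
    (hK : 0 ≤ K) (h : S ≤ K * S ^ p⁻¹) : S ≤ K ^ q := by
  rcases hS.eq_or_lt with rfl | hS
  · exact Real.rpow_nonneg hK q
  have hsplit : S ^ q⁻¹ * S ^ p⁻¹ = S := by
    rw [← Real.rpow_add hS, add_comm, hpq.inv_add_inv_eq_one, Real.rpow_one]
  have hle : S ^ q⁻¹ ≤ K :=
    le_of_mul_le_mul_right (hsplit.trans_le h) (Real.rpow_pos_of_pos hS _)
  calc S = (S ^ q⁻¹) ^ q := by
        rw [← Real.rpow_mul hS.le, inv_mul_cancel₀ hpq.symm.ne_zero, Real.rpow_one]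
    _ ≤ K ^ q := Real.rpow_le_rpow (by positivity) hle hpq.symm.nonneg

namespace lp

variable {ι : Type*} {p q : ℝ≥0∞}

theorem norm_le_mul_of_forall_apply_eq_mul [Fact (1 ≤ p)] {x y z : lp (fun _ : ι => ℝ) p}
    (h : ∀ i, z i = x i * y i) : ‖z‖ ≤ ‖x‖ * ‖y‖ := by
  have hp : p ≠ 0 := (zero_lt_one.trans_le Fact.out).ne'
  calc ‖z‖ ≤ ‖‖y‖ • x‖ := lp.norm_mono hp fun i => by
        rw [h, lp.coeFn_smul, Pi.smul_apply, norm_mul, norm_smul, norm_norm, mul_comm]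
        exact mul_le_mul_of_nonneg_right (lp.norm_apply_le_norm hp y i) (norm_nonneg _)
    _ = ‖x‖ * ‖y‖ := by rw [norm_smul, norm_norm, mul_comm]

theorem abs_tsum_mul_le (hpq : p.toReal.HolderConjugate q.toReal) (g : lp (fun _ : ι => ℝ) q)
    (w : lp (fun _ : ι => ℝ) p) : |∑' i, g i * w i| ≤ ‖g‖ * ‖w‖ := by
  obtain ⟨hsum, hle⟩ := lp.tsum_mul_le_mul_norm hpq.symm g w
  calc |∑' i, g i * w i| = ‖∑' i, g i * w i‖ := (Real.norm_eq_abs _).symm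
    _ ≤ ∑' i, ‖g i‖ * ‖w i‖ := by
        simpa only [norm_mul] using
          norm_tsum_le_tsum_norm (f := fun i => g i * w i) (by simpa only [norm_mul] using hsum)
    _ ≤ ‖g‖ * ‖w‖ := hle

theorem apply_single_eq_mul [DecidableEq ι] [Fact (1 ≤ p)] (f : lp (fun _ : ι => ℝ) p →L[ℝ] ℝ)
    (i : ι) (a : ℝ) : f (lp.single p i a) = a * f (lp.single p i 1) := by
  rw [← smul_eq_mul, ← map_smul, ← lp.single_smul, smul_eq_mul, mul_one]

theorem hasSum_apply_single_mul [DecidableEq ι] [Fact (1 ≤ p)] (hp : p ≠ ⊤)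
    (f : lp (fun _ : ι => ℝ) p →L[ℝ] ℝ) (w : lp (fun _ : ι => ℝ) p) :
    HasSum (fun i => f (lp.single p i 1) * w i) (f w) := by
  simpa only [apply_single_eq_mul f _ (w _), mul_comm] using (lp.hasSum_single hp w).mapL f

theorem sum_abs_apply_single_rpow_le [DecidableEq ι] [Fact (1 ≤ p)] {q : ℝ}
    (hpq : p.toReal.HolderConjugate q)
    (f : lp (fun _ : ι => ℝ) p →L[ℝ] ℝ) (s : Finset ι) :
    ∑ i ∈ s, |f (lp.single p i 1)| ^ q ≤ ‖f‖ ^ q := by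
  set c := fun i => f (lp.single p i 1)
  set S := ∑ i ∈ s, |c i| ^ q
  -- the extremal vector of Hölder's inequality for `c` on `s`: `f u = S = ‖u‖ ^ p`
  set u := ∑ i ∈ s, lp.single p i (c i * |c i| ^ (q - 2))
  have hq1 : q - 2 + 1 ≠ 0 := by linarith [hpq.symm.lt]
  have habs (t : ℝ) : |t * |t| ^ (q - 2)| = |t| ^ (q - 1) := by
    rw [abs_mul, abs_of_nonneg (Real.rpow_nonneg (abs_nonneg t) _), mul_comm,
      ← Real.rpow_add_one' (abs_nonneg t) hq1]
    ring_nf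
  have hmul (t : ℝ) : t * |t| ^ (q - 2) * t = |t| ^ q := by
    calc t * |t| ^ (q - 2) * t = |t| ^ (q - 2) * |t| * |t| := by
          linear_combination (-|t| ^ (q - 2)) * abs_mul_abs_self t
      _ = |t| ^ q := by
          rw [← Real.rpow_add_one' (abs_nonneg t) hq1,
            ← Real.rpow_add_one' (abs_nonneg t) (by linarith [hpq.symm.lt])]
          ring_nf
  have hfu : f u = S :=
    (map_sum f _ s).trans (Finset.sum_congr rfl fun i _ => by rw [apply_single_eq_mul, hmul])
  have hu : ‖u‖ ^ p.toReal = S := by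
    rw [lp.norm_sum_single hpq.pos]
    refine Finset.sum_congr rfl fun i _ => ?_
    rw [Real.norm_eq_abs, habs, ← Real.rpow_mul (abs_nonneg _), hpq.symm.sub_one_mul_conj]
  have hS : S ≤ ‖f‖ * S ^ p.toReal⁻¹ := by
    calc S = f u := hfu.symm
      _ ≤ ‖f‖ * ‖u‖ := (le_abs_self _).trans (f.le_opNorm u)
      _ = ‖f‖ * S ^ p.toReal⁻¹ := by
        rw [← hu, Real.rpow_rpow_inv (norm_nonneg u) hpq.pos.ne']
  exact Real.le_rpow_of_le_mul_rpow_inv hpq (by positivity) (norm_nonneg f) hS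

theorem memℓp_apply_single [DecidableEq ι] [Fact (1 ≤ p)]
    (hpq : p.toReal.HolderConjugate q.toReal)
    (f : lp (fun _ : ι => ℝ) p →L[ℝ] ℝ) : Memℓp (fun i => f (lp.single p i 1)) q :=
  memℓp_gen' fun s => by
    simpa only [Real.norm_eq_abs] using sum_abs_apply_single_rpow_le hpq f s

theorem abs_apply_sub_sum_le [DecidableEq ι] [Fact (1 ≤ p)] [Fact (1 ≤ q)] (hp : p ≠ ⊤)
    (hpq : p.toReal.HolderConjugate q.toReal) (f : lp (fun _ : ι => ℝ) p →L[ℝ] ℝ)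
    (g : lp (fun _ : ι => ℝ) q) (hg : ∀ i, g i = f (lp.single p i 1))
    (w : lp (fun _ : ι => ℝ) p) (s : Finset ι) :
    |f w - ∑ i ∈ s, g i * w i| ≤ ‖g - ∑ i ∈ s, lp.single q i (g i)‖ * ‖w‖ := by
  have hg_sum : HasSum (fun i => g i * w i) (f w) := by
    simpa only [hg] using hasSum_apply_single_mul hp f w
  have hhead :
      HasSum (fun i => (∑ j ∈ s, lp.single q j (g j)) i * w i) (∑ i ∈ s, g i * w i) := by
    simp only [lp.coeFn_sum, Finset.sum_apply, lp.coeFn_single, Finset.sum_mul]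
    refine hasSum_sum fun j _ => ?_
    convert hasSum_pi_single j (g j * w j) using 1
    ext i
    rcases eq_or_ne i j with rfl | hij <;> simp [*]
  rw [← ((hg_sum.sub hhead).congr_fun fun i => sub_mul _ _ _).tsum_eq]
  simpa only [lp.coeFn_sub, Pi.sub_apply] using
    abs_tsum_mul_le hpq (g - ∑ i ∈ s, lp.single q i (g i)) w

theorem weaklyNull_of_norm_le_of_tendsto_apply [DecidableEq ι] [Fact (1 ≤ p)] (hp1 : 1 < p)
    (hp2 : p ≠ ⊤) {z : ℕ → lp (fun _ : ι => ℝ) p} {M : ℝ} (hM : ∀ n, ‖z n‖ ≤ M)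
    (hz : ∀ i, Tendsto (fun n => z n i) atTop (𝓝 0)) : WeaklyNull z := by
  intro f
  set q := p.conjExponent
  have : Fact (1 ≤ q) := ⟨ENNReal.HolderConjugate.one_le q p⟩
  have hq : q ≠ ⊤ := ((ENNReal.HolderConjugate.lt_top_iff_one_lt q p).2 hp1).ne
  have hpq : p.toReal.HolderConjugate q.toReal := ENNReal.HolderConjugate.toReal_of_ne_top hp2 hq
  let g : lp (fun _ : ι => ℝ) q := ⟨fun i => f (lp.single p i 1), memℓp_apply_single hpq f⟩
  rw [Metric.tendsto_nhds]
  intro ε hε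
  obtain ⟨s, hs⟩ : ∃ s : Finset ι, ‖g - ∑ i ∈ s, lp.single q i (g i)‖ * M < ε / 2 := by
    have htail := (tendsto_iff_norm_sub_tendsto_zero.1 (lp.hasSum_single hq g)).mul_const M
    rw [zero_mul] at htail
    simpa only [norm_sub_rev] using (htail.eventually (gt_mem_nhds (half_pos hε))).exists
  have hhead : Tendsto (fun n => ∑ i ∈ s, g i * z n i) atTop (𝓝 0) := by
    simpa using tendsto_finsetSum s fun i _ => (hz i).const_mul (g i)
  filter_upwards [Metric.tendsto_nhds.1 hhead (ε / 2) (half_pos hε)] with n hn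
  rw [Real.dist_eq, sub_zero] at hn ⊢
  have htail : |f (z n) - ∑ i ∈ s, g i * z n i| < ε / 2 :=
    (abs_apply_sub_sum_le hp2 hpq f g (fun _ => rfl) (z n) s).trans_lt
      ((mul_le_mul_of_nonneg_left (hM n) (norm_nonneg _)).trans_lt hs)
  linarith [abs_sub_abs_le_abs_sub (f (z n)) (∑ i ∈ s, g i * z n i)]

end lp

theorem lp_pointwise_mul_jwsc (p : ℝ≥0∞) [Fact (1 ≤ p)] (hp1 : 1 < p) (hp2 : p ≠ ⊤)
    (x y z : ℕ → lp (fun _ : ℕ => ℝ) p)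
    (hx : WeaklyNull x) (hy : WeaklyNull y)
    (hz : ∀ n i, (z n : ℕ → ℝ) i = (x n : ℕ → ℝ) i * (y n : ℕ → ℝ) i) :
    WeaklyNull z := by
  obtain ⟨Cx, hCx⟩ := hx.exists_norm_le
  obtain ⟨Cy, hCy⟩ := hy.exists_norm_le
  refine lp.weaklyNull_of_norm_le_of_tendsto_apply hp1 hp2 (M := Cx * Cy) (fun n => ?_)
    fun i => ?_
  · calc ‖z n‖ ≤ ‖x n‖ * ‖y n‖ := lp.norm_le_mul_of_forall_apply_eq_mul (hz n)
      _ ≤ Cx * Cy := mul_le_mul (hCx n) (hCy n) (norm_nonneg _) ((norm_nonneg _).trans (hCx n))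
  · simpa only [hz, mul_zero] using (hx.tendsto_apply i).mul (hy.tendsto_apply i)
end

section
/- Let X be a Banach space and A = K(X). If for every f ∈ A* and every weakly null (x_n) and bounded (y_n) in K(X) one has f(y_n x_n) → 0, then X has the Schur property. -/
open Filter Topology ENNReal

variable (X : Type*) [NormedAddCommGroup X] [NormedSpace ℝ X]

/-- The space `K(X)` of compact operators on `X`, as a submodule of `X →L[ℝ] X`. -/
noncomputable abbrev KX : Submodule ℝ (X →L[ℝ] X) :=
  compactOperator (RingHom.id ℝ) X X

/-- Multiplication (composition) in `K(X)`. -/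
noncomputable def Kmul {X : Type*} [NormedAddCommGroup X] [NormedSpace ℝ X]
    (a b : KX X) : KX X :=
  ⟨(a : X →L[ℝ] X).comp (b : X →L[ℝ] X), by
    exact a.2.comp_clm (b : X →L[ℝ] X)⟩

/-- Right multiplication by `a` in `K(X)` as a continuous linear map. -/
noncomputable def KmulRight {X : Type*} [NormedAddCommGroup X] [NormedSpace ℝ X]
    (a : KX X) : KX X →L[ℝ] KX X :=
  LinearMap.mkContinuous
    { toFun := fun b => Kmul b a
      map_add' := by
        intro b c
        apply Subtype.ext
        simp [Kmul, ContinuousLinearMap.add_comp]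
      map_smul' := by
        intro r b
        apply Subtype.ext
        simp [Kmul, ContinuousLinearMap.smul_comp] }
    ‖(a : X →L[ℝ] X)‖
    (by
      intro b
      calc ‖Kmul b a‖ = ‖(b : X →L[ℝ] X).comp (a : X →L[ℝ] X)‖ := rfl
        _ ≤ ‖(b : X →L[ℝ] X)‖ * ‖(a : X →L[ℝ] X)‖ := ContinuousLinearMap.opNorm_comp_le _ _
        _ = ‖(a : X →L[ℝ] X)‖ * ‖b‖ := by rw [mul_comm]; rfl)

/-- Left multiplication by `a` in `K(X)` as a continuous linear map. -/
noncomputable def KmulLeft {X : Type*} [NormedAddCommGroup X] [NormedSpace ℝ X]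
    (a : KX X) : KX X →L[ℝ] KX X :=
  LinearMap.mkContinuous
    { toFun := fun b => Kmul a b
      map_add' := by
        intro b c
        apply Subtype.ext
        simp [Kmul, ContinuousLinearMap.comp_add]
      map_smul' := by
        intro r b
        apply Subtype.ext
        simp [Kmul, ContinuousLinearMap.comp_smul] }
    ‖(a : X →L[ℝ] X)‖
    (by
      intro b
      calc ‖Kmul a b‖ = ‖(a : X →L[ℝ] X).comp (b : X →L[ℝ] X)‖ := rfl
        _ ≤ ‖(a : X →L[ℝ] X)‖ * ‖(b : X →L[ℝ] X)‖ := ContinuousLinearMap.opNorm_comp_le _ _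
        _ = ‖(a : X →L[ℝ] X)‖ * ‖b‖ := rfl)

/-- The operator `T_f : K(X) → K(X)*`, `(T_f a)(x) = f (a x)` (product = composition). -/
noncomputable def TfK {X : Type*} [NormedAddCommGroup X] [NormedSpace ℝ X]
    (f : KX X →L[ℝ] ℝ) (a : KX X) : KX X →L[ℝ] ℝ :=
  f.comp (KmulLeft a)

/-- The operator `S_f : K(X) → K(X)*`, `(S_f a)(x) = f (x a)`. -/
noncomputable def SfK {X : Type*} [NormedAddCommGroup X] [NormedSpace ℝ X]
    (f : KX X →L[ℝ] ℝ) (a : KX X) : KX X →L[ℝ] ℝ :=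
  f.comp (KmulRight a)

/-! If `zₙ` is weakly null in `X`, pick `u ≠ 0` with a norming functional `φ`, and norming
functionals `gₙ` of `zₙ`. Then `zₙ ⊗ φ` is weakly null in `K(X)` (the image of `zₙ` under a bounded
linear map), `u ⊗ gₙ` is bounded, and `(u ⊗ gₙ)(zₙ ⊗ φ) = gₙ(zₙ) (u ⊗ φ) = ‖zₙ‖ (u ⊗ φ)`.
Evaluating at a functional that norms `u ⊗ φ ≠ 0` turns the hypothesis into `‖zₙ‖ → 0`. -/

namespace WeaklyNull

variable {A B : Type*} [NormedAddCommGroup A] [NormedSpace ℝ A]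
  [NormedAddCommGroup B] [NormedSpace ℝ B]

theorem map_s17 {x : ℕ → A} (hx : WeaklyNull x) (T : A →L[ℝ] B) : WeaklyNull fun n => T (x n) :=
  fun f => hx (f.comp T)

theorem sub_of_forall_tendsto {x : ℕ → A} {L : A}
    (hx : ∀ f : A →L[ℝ] ℝ, Tendsto (fun n => f (x n)) atTop (𝓝 (f L))) :
    WeaklyNull fun n => x n - L :=
  fun f => by simpa using (hx f).sub_const (f L)

end WeaklyNull

theorem SchurProperty.of_completelyContinuous_id {A : Type*} [NormedAddCommGroup A]
    [NormedSpace ℝ A] (h : CompletelyContinuous (id : A → A)) : SchurProperty A :=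
  fun _ _ hx => tendsto_iff_norm_sub_tendsto_zero.2 (h _ (WeaklyNull.sub_of_forall_tendsto hx))

theorem isCompactOperator_smulRight {𝕜 E F : Type*} [RCLike 𝕜] [NormedAddCommGroup E]
    [NormedSpace 𝕜 E] [NormedAddCommGroup F] [NormedSpace 𝕜 F] (φ : StrongDual 𝕜 E) (z : F) :
    IsCompactOperator (φ.smulRight z) := by
  have : ⇑(φ.smulRight z) = ContinuousLinearMap.toSpanSingleton 𝕜 z ∘ φ := by
    ext; simp
  rw [this]
  exact (isCompactOperator_of_locallyCompactSpace_rng _).comp_clm φ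

section RankOne

variable {X : Type*} [NormedAddCommGroup X] [NormedSpace ℝ X]

/-- `rankOne φ z` is the operator `z ⊗ φ : v ↦ φ v • z`. -/
noncomputable def rankOne (φ : StrongDual ℝ X) : X →L[ℝ] KX X :=
  (ContinuousLinearMap.smulRightL ℝ X X φ).codRestrict (KX X) (isCompactOperator_smulRight φ)

@[simp]
theorem coe_rankOne_apply (φ : StrongDual ℝ X) (z v : X) :
    (rankOne φ z : X →L[ℝ] X) v = φ v • z :=
  rfl

theorem norm_rankOne (φ : StrongDual ℝ X) (z : X) : ‖rankOne φ z‖ = ‖φ‖ * ‖z‖ :=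
  φ.norm_smulRight_apply z

theorem Kmul_rankOne_rankOne (g φ : StrongDual ℝ X) (u z : X) :
    Kmul (rankOne g u) (rankOne φ z) = g z • rankOne φ u := by
  ext v
  simp [Kmul, smul_smul, mul_comm]

end RankOne

theorem schur_of_sfK_cc
    (h : ∀ f : KX X →L[ℝ] ℝ, ∀ x y : ℕ → KX X, WeaklyNull x →
      (∃ C : ℝ, ∀ n, ‖y n‖ ≤ C) →
      Tendsto (fun n => f (Kmul (y n) (x n))) atTop (𝓝 0)) :
    SchurProperty X := by
  refine SchurProperty.of_completelyContinuous_id fun z hz => ?_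
  rcases subsingleton_or_nontrivial X with _ | _
  · simp [Subsingleton.elim _ (0 : X)]
  obtain ⟨u, hu⟩ := exists_ne (0 : X)
  obtain ⟨φ, hφ, -⟩ := exists_dual_vector ℝ u (norm_ne_zero_iff.2 hu)
  choose g hg hgz using fun n => exists_dual_vector'' ℝ (z n)
  set b := rankOne φ u
  have hb : 0 < ‖b‖ := by
    rw [norm_rankOne, hφ, one_mul]
    exact norm_pos_iff.2 hu
  obtain ⟨f, -, hfb⟩ := exists_dual_vector'' ℝ b
  have hprod : ∀ n, f (Kmul (rankOne (g n) u) (rankOne φ (z n))) = ‖z n‖ * ‖b‖ := fun n => by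
    rw [Kmul_rankOne_rankOne, hgz, map_smul, hfb, smul_eq_mul]
    rfl
  have hy : ∀ n, ‖rankOne (g n) u‖ ≤ ‖u‖ := fun n => by
    rw [norm_rankOne]
    exact mul_le_of_le_one_left (norm_nonneg u) (hg n)
  have hlim := h f _ _ (hz.map_s17 (rankOne φ)) ⟨‖u‖, hy⟩
  simp only [hprod] at hlim
  simpa only [mul_div_cancel_right₀ _ hb.ne', zero_div, id_eq] using hlim.div_const ‖b‖
end
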